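/- arXiv:hep-th/9311121 — 3 statements merged into one kernel-verified Lean document; each statement's English description precedes it below -/
import Mathlib

section
/- For 𝒜 = M_m(ℂ) ⊕ M_n(ℂ) with off-diagonal Dirac matrix ℳ = [[0, μ*],[μ, 0]] where neither μ*μ nor μμ* is a scalar multiple of the identity, one has π(Ω²𝒜) = π(𝒜) = J² (as subspaces of M_{m+n}(ℂ)), and hence π(Ωᵏ𝒜) = π(Jᵏ) for all k ≥ 2; consequently Ω_Dᵏ𝒜 = 0 for k ≥ 2, and Ω_D¹𝒜 ≅ ℂ^{m×n} ⊕ ℂ^{n×m} as an 𝒜-module, with the product of any two elements of Ω_D¹𝒜 vanishing in Ω_D²𝒜. -/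
open Matrix

noncomputable section

/-- The algebra 𝒜 = M_m(ℂ) ⊕ M_n(ℂ). -/
abbrev TwoPtAlg (m n : ℕ) := Matrix (Fin m) (Fin m) ℂ × Matrix (Fin n) (Fin n) ℂ

variable (m n : ℕ)

/-- The block-diagonal representation π(a, b) = diag(a, b) on ℂ^{m+n}. -/
def piRep (p : TwoPtAlg m n) : Matrix (Fin m ⊕ Fin n) (Fin m ⊕ Fin n) ℂ :=
  Matrix.fromBlocks p.1 0 0 p.2

/-- The off-diagonal Dirac matrix ℳ = [[0, μ*],[μ, 0]], μ an n×m matrix. -/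
def diracM (μ : Matrix (Fin n) (Fin m) ℂ) : Matrix (Fin m ⊕ Fin n) (Fin m ⊕ Fin n) ℂ :=
  Matrix.fromBlocks 0 μ.conjTranspose μ 0

/-- The represented one-form [ℳ, π(a)]. -/
def commM (μ : Matrix (Fin n) (Fin m) ℂ) (a : TwoPtAlg m n) :
    Matrix (Fin m ⊕ Fin n) (Fin m ⊕ Fin n) ℂ :=
  diracM m n μ * piRep m n a - piRep m n a * diracM m n μ

/-- π(Ωᵏ𝒜): the span of the monomials π(a₀)[ℳ,π(a₁)]⋯[ℳ,π(aₖ)]. -/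
def piOmega (μ : Matrix (Fin n) (Fin m) ℂ) (k : ℕ) :
    Submodule ℂ (Matrix (Fin m ⊕ Fin n) (Fin m ⊕ Fin n) ℂ) :=
  Submodule.span ℂ {x | ∃ (a₀ : TwoPtAlg m n) (l : List (TwoPtAlg m n)), l.length = k ∧
    x = piRep m n a₀ * (l.map (commM m n μ)).prod}

/-- π(Jᵏ) = π(δ K^{k-1}) (π(Kᵏ) contributes 0). -/
def piJ (μ : Matrix (Fin n) (Fin m) ℂ) : ℕ → Submodule ℂ
    (Matrix (Fin m ⊕ Fin n) (Fin m ⊕ Fin n) ℂ)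
  | 0 => ⊥
  | (k + 1) => Submodule.span ℂ {x | ∃ (s : ℕ) (a : Fin s → TwoPtAlg m n)
      (l : Fin s → List (TwoPtAlg m n)), (∀ r, (l r).length = k) ∧
      (∑ r, piRep m n (a r) * ((l r).map (commM m n μ)).prod) = 0 ∧
      x = ∑ r, commM m n μ (a r) * ((l r).map (commM m n μ)).prod}

-- ==================== helpers ====================

lemma mul_E_mul_apply {I J K L : Type*} [Fintype J] [Fintype K] [DecidableEq J] [DecidableEq K]
    (P : Matrix I J ℂ) (Q : Matrix K L ℂ) (a : J) (b : K) (c : ℂ) (i : I) (l : L) :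
    (P * Matrix.single a b c * Q) i l = P i a * c * Q b l := by
  simp [mul_apply, Matrix.single, ite_and, Finset.mul_sum, Finset.sum_mul]

lemma E_mul_mul_E {I J K L : Type*} [Fintype J] [Fintype K]
    [DecidableEq I] [DecidableEq J] [DecidableEq K] [DecidableEq L]
    (X : Matrix J K ℂ) (p : I) (i : J) (j : K) (q : L) :
    Matrix.single p i (1:ℂ) * X * Matrix.single j q (1:ℂ) = Matrix.single p q (X i j) := by
  ext a b
  simp [mul_apply, Matrix.single, ite_and, Finset.mul_sum, Finset.sum_mul]
  aesop

lemma fromBlocks_sub {α l m n o : Type*} [SubtractionMonoid α]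
    (A : Matrix n l α) (B : Matrix n m α) (C : Matrix o l α) (D : Matrix o m α)
    (A' : Matrix n l α) (B' : Matrix n m α) (C' : Matrix o l α) (D' : Matrix o m α) :
    fromBlocks A B C D - fromBlocks A' B' C' D' =
      fromBlocks (A - A') (B - B') (C - C') (D - D') := by
  ext (i|i) (j|j) <;> simp

variable {m n}

lemma commM_eq (μ : Matrix (Fin n) (Fin m) ℂ) (a : TwoPtAlg m n) :
    commM m n μ a = fromBlocks 0 (μ.conjTranspose * a.2 - a.1 * μ.conjTranspose)
      (μ * a.1 - a.2 * μ) 0 := by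
  simp [commM, diracM, piRep, fromBlocks_multiply, fromBlocks_sub]

variable (m n) in
def diagSet : Submodule ℂ (Matrix (Fin m ⊕ Fin n) (Fin m ⊕ Fin n) ℂ) where
  carrier := {x | (∀ i j, x (Sum.inl i) (Sum.inr j) = 0) ∧ ∀ i j, x (Sum.inr i) (Sum.inl j) = 0}
  add_mem' := by rintro x y ⟨hx1, hx2⟩ ⟨hy1, hy2⟩; exact ⟨fun i j => by simp [hx1, hy1],
    fun i j => by simp [hx2, hy2]⟩
  zero_mem' := ⟨fun i j => rfl, fun i j => rfl⟩
  smul_mem' := by rintro c x ⟨hx1, hx2⟩; exact ⟨fun i j => by simp [hx1],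
    fun i j => by simp [hx2]⟩

variable (m n) in
def offSet : Submodule ℂ (Matrix (Fin m ⊕ Fin n) (Fin m ⊕ Fin n) ℂ) where
  carrier := {x | (∀ i j, x (Sum.inl i) (Sum.inl j) = 0) ∧ ∀ i j, x (Sum.inr i) (Sum.inr j) = 0}
  add_mem' := by rintro x y ⟨hx1, hx2⟩ ⟨hy1, hy2⟩; exact ⟨fun i j => by simp [hx1, hy1],
    fun i j => by simp [hx2, hy2]⟩
  zero_mem' := ⟨fun i j => rfl, fun i j => rfl⟩
  smul_mem' := by rintro c x ⟨hx1, hx2⟩; exact ⟨fun i j => by simp [hx1],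
    fun i j => by simp [hx2]⟩

lemma fromBlocks_mem_diagSet (a : Matrix (Fin m) (Fin m) ℂ) (b : Matrix (Fin n) (Fin n) ℂ) :
    fromBlocks a 0 0 b ∈ diagSet m n :=
  ⟨fun i j => rfl, fun i j => rfl⟩

lemma fromBlocks_mem_offSet (A : Matrix (Fin m) (Fin n) ℂ) (B : Matrix (Fin n) (Fin m) ℂ) :
    fromBlocks 0 A B 0 ∈ offSet m n :=
  ⟨fun i j => rfl, fun i j => rfl⟩

lemma piRep_mem_diagSet (a : TwoPtAlg m n) : piRep m n a ∈ diagSet m n :=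
  fromBlocks_mem_diagSet _ _

lemma commM_mem_offSet (μ : Matrix (Fin n) (Fin m) ℂ) (a : TwoPtAlg m n) :
    commM m n μ a ∈ offSet m n := by
  rw [commM_eq]; exact fromBlocks_mem_offSet _ _

lemma mul_mem_diag_of_off_off {x y : Matrix (Fin m ⊕ Fin n) (Fin m ⊕ Fin n) ℂ}
    (hx : x ∈ offSet m n) (hy : y ∈ offSet m n) : x * y ∈ diagSet m n := by
  obtain ⟨hx1, hx2⟩ := hx; obtain ⟨hy1, hy2⟩ := hy
  constructor <;> intro i j <;>
    simp [mul_apply, Fintype.sum_sum_type, hx1, hx2, hy1, hy2]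

lemma mul_mem_off_of_diag_off {x y : Matrix (Fin m ⊕ Fin n) (Fin m ⊕ Fin n) ℂ}
    (hx : x ∈ diagSet m n) (hy : y ∈ offSet m n) : x * y ∈ offSet m n := by
  obtain ⟨hx1, hx2⟩ := hx; obtain ⟨hy1, hy2⟩ := hy
  constructor <;> intro i j <;>
    simp [mul_apply, Fintype.sum_sum_type, hx1, hx2, hy1, hy2]

lemma mul_mem_diag_of_diag_diag {x y : Matrix (Fin m ⊕ Fin n) (Fin m ⊕ Fin n) ℂ}
    (hx : x ∈ diagSet m n) (hy : y ∈ diagSet m n) : x * y ∈ diagSet m n := by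
  obtain ⟨hx1, hx2⟩ := hx; obtain ⟨hy1, hy2⟩ := hy
  constructor <;> intro i j <;>
    simp [mul_apply, Fintype.sum_sum_type, hx1, hx2, hy1, hy2]

lemma mem_diagSet_eq {x : Matrix (Fin m ⊕ Fin n) (Fin m ⊕ Fin n) ℂ} (hx : x ∈ diagSet m n) :
    x = fromBlocks (x.toBlocks₁₁) 0 0 (x.toBlocks₂₂) := by
  obtain ⟨hx1, hx2⟩ := hx
  ext (i|i) (j|j) <;> simp [fromBlocks, toBlocks₁₁, toBlocks₂₂, hx1, hx2]

lemma mem_offSet_eq {x : Matrix (Fin m ⊕ Fin n) (Fin m ⊕ Fin n) ℂ} (hx : x ∈ offSet m n) :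
    x = fromBlocks 0 (x.toBlocks₁₂) (x.toBlocks₂₁) 0 := by
  obtain ⟨hx1, hx2⟩ := hx
  ext (i|i) (j|j) <;> simp [fromBlocks, toBlocks₁₂, toBlocks₂₁, hx1, hx2]

variable (m n) in
def topEmbed : Matrix (Fin m) (Fin m) ℂ →ₗ[ℂ] Matrix (Fin m ⊕ Fin n) (Fin m ⊕ Fin n) ℂ where
  toFun X := fromBlocks X 0 0 0
  map_add' X Y := by ext (i|i) (j|j) <;> simp [fromBlocks]
  map_smul' c X := by ext (i|i) (j|j) <;> simp [fromBlocks]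

variable (m n) in
def botEmbed : Matrix (Fin n) (Fin n) ℂ →ₗ[ℂ] Matrix (Fin m ⊕ Fin n) (Fin m ⊕ Fin n) ℂ where
  toFun Y := fromBlocks 0 0 0 Y
  map_add' X Y := by ext (i|i) (j|j) <;> simp [fromBlocks]
  map_smul' c X := by ext (i|i) (j|j) <;> simp [fromBlocks]

variable (m n) in
def topOffEmbed : Matrix (Fin m) (Fin n) ℂ →ₗ[ℂ] Matrix (Fin m ⊕ Fin n) (Fin m ⊕ Fin n) ℂ where
  toFun X := fromBlocks 0 X 0 0
  map_add' X Y := by ext (i|i) (j|j) <;> simp [fromBlocks]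
  map_smul' c X := by ext (i|i) (j|j) <;> simp [fromBlocks]

variable (m n) in
def botOffEmbed : Matrix (Fin n) (Fin m) ℂ →ₗ[ℂ] Matrix (Fin m ⊕ Fin n) (Fin m ⊕ Fin n) ℂ where
  toFun Y := fromBlocks 0 0 Y 0
  map_add' X Y := by ext (i|i) (j|j) <;> simp [fromBlocks]
  map_smul' c X := by ext (i|i) (j|j) <;> simp [fromBlocks]

/-- To show an embedded block lies in a submodule, enough to check std basis matrices. -/
lemma embed_mem_of_stdBasis {I J : Type*} [Fintype I] [DecidableEq I] [Fintype J] [DecidableEq J]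
    (f : Matrix I J ℂ →ₗ[ℂ] Matrix (Fin m ⊕ Fin n) (Fin m ⊕ Fin n) ℂ)
    (S : Submodule ℂ (Matrix (Fin m ⊕ Fin n) (Fin m ⊕ Fin n) ℂ))
    (h : ∀ i j, f (Matrix.single i j 1) ∈ S) (X : Matrix I J ℂ) : f X ∈ S := by
  rw [matrix_eq_sum_single X]
  rw [map_sum]
  refine Submodule.sum_mem _ fun i _ => ?_
  rw [map_sum]
  refine Submodule.sum_mem _ fun j _ => ?_
  have : Matrix.single i j (X i j) = (X i j) • Matrix.single i j (1:ℂ) := by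
    rw [smul_single]; simp
  rw [this, _root_.map_smul]
  exact Submodule.smul_mem _ _ (h i j)

section comps
variable (μ : Matrix (Fin n) (Fin m) ℂ) (a c x : Matrix (Fin m) (Fin m) ℂ)
  (b d e y : Matrix (Fin n) (Fin n) ℂ)

lemma comp1 : piRep m n (x, 0) * commM m n μ (0, e) =
    fromBlocks 0 (x * (μ.conjTranspose * e)) 0 0 := by
  simp [commM_eq, piRep, fromBlocks_multiply, mul_sub, sub_mul, mul_assoc]

lemma comp2 : piRep m n (0, y) * commM m n μ (a, 0) =
    fromBlocks 0 0 (y * (μ * a)) 0 := by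
  simp [commM_eq, piRep, fromBlocks_multiply, mul_sub, sub_mul, mul_assoc]

lemma comp3 : piRep m n (a, 0) * commM m n μ (c, 0) =
    fromBlocks 0 (-(a * (c * μ.conjTranspose))) 0 0 := by
  simp [commM_eq, piRep, fromBlocks_multiply, mul_sub, sub_mul, mul_assoc]

lemma comp4 : piRep m n (0, b) * commM m n μ (0, d) =
    fromBlocks 0 0 (-(b * (d * μ))) 0 := by
  simp [commM_eq, piRep, fromBlocks_multiply, mul_sub, sub_mul, mul_assoc]

lemma comp5 : commM m n μ (a, 0) * commM m n μ (c, 0) =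
    fromBlocks (-(a * (μ.conjTranspose * (μ * c)))) 0 0 (-(μ * (a * (c * μ.conjTranspose)))) := by
  simp [commM_eq, fromBlocks_multiply, mul_sub, sub_mul, mul_assoc, Matrix.mul_assoc]

lemma comp6 : commM m n μ (0, b) * commM m n μ (0, d) =
    fromBlocks (-(μ.conjTranspose * (b * (d * μ)))) 0 0 (-(b * (μ * (μ.conjTranspose * d)))) := by
  simp [commM_eq, fromBlocks_multiply, mul_sub, sub_mul, mul_assoc, Matrix.mul_assoc]

lemma comp7 : commM m n μ (0, e) * commM m n μ (a, 0) =
    fromBlocks (μ.conjTranspose * (e * (μ * a))) 0 0 (e * (μ * (a * μ.conjTranspose))) := by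
  simp [commM_eq, fromBlocks_multiply, mul_sub, sub_mul, mul_assoc, Matrix.mul_assoc]

lemma comp8 : commM m n μ (a, 0) * commM m n μ (0, e) =
    fromBlocks (a * (μ.conjTranspose * (e * μ))) 0 0 (μ * (a * (μ.conjTranspose * e))) := by
  simp [commM_eq, fromBlocks_multiply, mul_sub, sub_mul, mul_assoc, Matrix.mul_assoc]

end comps

section spans
variable (μ : Matrix (Fin n) (Fin m) ℂ)

lemma piJ_succ (k : ℕ) : piJ m n μ (k + 1) = Submodule.span ℂ
    {x | ∃ (s : ℕ) (a : Fin s → TwoPtAlg m n)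
      (l : Fin s → List (TwoPtAlg m n)), (∀ r, (l r).length = k) ∧
      (∑ r, piRep m n (a r) * ((l r).map (commM m n μ)).prod) = 0 ∧
      x = ∑ r, commM m n μ (a r) * ((l r).map (commM m n μ)).prod} := rfl

lemma piOmega_zero_eq : piOmega m n μ 0 = diagSet m n := by
  apply le_antisymm
  · rw [piOmega, Submodule.span_le]
    rintro x ⟨a₀, l, hl, rfl⟩
    rw [List.length_eq_zero_iff] at hl
    subst hl
    simpa using piRep_mem_diagSet a₀
  · intro x hx
    apply Submodule.subset_span
    refine ⟨(x.toBlocks₁₁, x.toBlocks₂₂), [], rfl, ?_⟩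
    simpa [piRep] using mem_diagSet_eq hx

lemma piOmega_one_le_off : piOmega m n μ 1 ≤ offSet m n := by
  rw [piOmega, Submodule.span_le]
  rintro x ⟨a₀, l, hl, rfl⟩
  rw [List.length_eq_one_iff] at hl
  obtain ⟨c, rfl⟩ := hl
  simp only [List.map_cons, List.map_nil, List.prod_cons, List.prod_nil, mul_one]
  exact mul_mem_off_of_diag_off (piRep_mem_diagSet a₀) (commM_mem_offSet μ c)

lemma piOmega_two_le_diag : piOmega m n μ 2 ≤ diagSet m n := by
  rw [piOmega, Submodule.span_le]
  rintro x ⟨a₀, l, hl, rfl⟩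
  rw [List.length_eq_two] at hl
  obtain ⟨c₁, c₂, rfl⟩ := hl
  simp only [List.map_cons, List.map_nil, List.prod_cons, List.prod_nil, mul_one]
  exact mul_mem_diag_of_diag_diag (piRep_mem_diagSet a₀)
    (mul_mem_diag_of_off_off (commM_mem_offSet μ c₁) (commM_mem_offSet μ c₂))

end spans

lemma smul_trick {I J : Type*} [DecidableEq I] [DecidableEq J]
    (f : Matrix I J ℂ →ₗ[ℂ] Matrix (Fin m ⊕ Fin n) (Fin m ⊕ Fin n) ℂ)
    (S : Submodule ℂ (Matrix (Fin m ⊕ Fin n) (Fin m ⊕ Fin n) ℂ)) {p : I} {q : J} {c : ℂ}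
    (hc : c ≠ 0) (h : f (Matrix.single p q c) ∈ S) : f (Matrix.single p q 1) ∈ S := by
  have : Matrix.single p q (1 : ℂ) = c⁻¹ • Matrix.single p q c := by
    rw [smul_single, smul_eq_mul, inv_mul_cancel₀ hc]
  rw [this, _root_.map_smul]
  exact S.smul_mem _ h

lemma exists_entry_ne {μ : Matrix (Fin n) (Fin m) ℂ} (hμ : μ ≠ 0) : ∃ j i, μ j i ≠ 0 := by
  by_contra h
  push_neg at h
  exact hμ (by ext j i; simpa using h j i)

section offmem
variable {μ : Matrix (Fin n) (Fin m) ℂ} {j₀ : Fin n} {i₀ : Fin m} (h₀ : μ j₀ i₀ ≠ 0)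
include h₀

lemma topOff_std_mem (p : Fin m) (q : Fin n) :
    topOffEmbed m n (Matrix.single p q 1) ∈ piOmega m n μ 1 := by
  apply smul_trick (c := μ.conjTranspose i₀ j₀)
  · simpa [conjTranspose_apply] using star_ne_zero.mpr h₀
  · apply Submodule.subset_span
    refine ⟨(Matrix.single p i₀ 1, 0), [(0, Matrix.single j₀ q 1)], rfl, ?_⟩
    simp only [List.map_cons, List.map_nil, List.prod_cons, List.prod_nil, mul_one, comp1]
    have := E_mul_mul_E μ.conjTranspose p i₀ j₀ q
    simp only [topOffEmbed, LinearMap.coe_mk, AddHom.coe_mk]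
    rw [← this, Matrix.mul_assoc]

lemma botOff_std_mem (p : Fin n) (q : Fin m) :
    botOffEmbed m n (Matrix.single p q 1) ∈ piOmega m n μ 1 := by
  apply smul_trick (c := μ j₀ i₀)
  · exact h₀
  apply Submodule.subset_span
  refine ⟨(0, Matrix.single p j₀ 1), [(Matrix.single i₀ q 1, 0)], rfl, ?_⟩
  simp only [List.map_cons, List.map_nil, List.prod_cons, List.prod_nil, mul_one, comp2]
  have := E_mul_mul_E μ p j₀ i₀ q
  simp only [botOffEmbed, LinearMap.coe_mk, AddHom.coe_mk]
  rw [← this, Matrix.mul_assoc]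

lemma off_le_piOmega_one : offSet m n ≤ piOmega m n μ 1 := by
  intro x hx
  rw [mem_offSet_eq hx]
  have h1 : fromBlocks 0 x.toBlocks₁₂ 0 0 ∈ piOmega m n μ 1 :=
    embed_mem_of_stdBasis (topOffEmbed m n) _ (fun i j => topOff_std_mem h₀ i j) _
  have h2 : fromBlocks 0 0 x.toBlocks₂₁ 0 ∈ piOmega m n μ 1 :=
    embed_mem_of_stdBasis (botOffEmbed m n) _ (fun i j => botOff_std_mem h₀ i j) _
  have : fromBlocks 0 x.toBlocks₁₂ x.toBlocks₂₁ (0 : Matrix (Fin n) (Fin n) ℂ) =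
      fromBlocks 0 x.toBlocks₁₂ 0 0 + fromBlocks 0 0 x.toBlocks₂₁ 0 := by
    rw [fromBlocks_add]; simp
  rw [this]
  exact Submodule.add_mem _ h1 h2

end offmem

lemma piRep_left_mul (x : Matrix (Fin m) (Fin m) ℂ) (P : Matrix (Fin m) (Fin m) ℂ)
    (Q : Matrix (Fin n) (Fin n) ℂ) :
    piRep m n (x, 0) * fromBlocks P 0 0 Q = fromBlocks (x * P) 0 0 0 := by
  simp [piRep, fromBlocks_multiply]

lemma piRep_right_mul (y : Matrix (Fin n) (Fin n) ℂ) (P : Matrix (Fin m) (Fin m) ℂ)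
    (Q : Matrix (Fin n) (Fin n) ℂ) :
    piRep m n (0, y) * fromBlocks P 0 0 Q = fromBlocks 0 0 0 (y * Q) := by
  simp [piRep, fromBlocks_multiply]

section diagmem
variable {μ : Matrix (Fin n) (Fin m) ℂ} {j₀ : Fin n} {i₀ : Fin m} (h₀ : μ j₀ i₀ ≠ 0)
include h₀

lemma top_std_mem_omega2 (p q : Fin m) :
    topEmbed m n (Matrix.single p q 1) ∈ piOmega m n μ 2 := by
  apply smul_trick (c := μ.conjTranspose i₀ j₀ * 1 * μ j₀ i₀)
  · simp only [mul_one, conjTranspose_apply]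
    exact mul_ne_zero (star_ne_zero.mpr h₀) h₀
  · apply Submodule.subset_span
    refine ⟨(Matrix.single p i₀ 1, 0), [(0, Matrix.single j₀ j₀ 1),
      (Matrix.single i₀ q 1, 0)], rfl, ?_⟩
    simp only [List.map_cons, List.map_nil, List.prod_cons, List.prod_nil, mul_one]
    rw [comp7, piRep_left_mul]
    have key : Matrix.single p i₀ (1:ℂ) *
        (μ.conjTranspose * (Matrix.single j₀ j₀ (1:ℂ) * (μ * Matrix.single i₀ q (1:ℂ)))) =
        Matrix.single p q ((μ.conjTranspose * Matrix.single j₀ j₀ (1:ℂ) * μ) i₀ i₀) := by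
      have := E_mul_mul_E (μ.conjTranspose * Matrix.single j₀ j₀ (1:ℂ) * μ) p i₀ i₀ q
      rw [← this]
      simp [Matrix.mul_assoc]
    rw [key, mul_E_mul_apply]
    simp [topEmbed]

lemma bot_std_mem_omega2 (p q : Fin n) :
    botEmbed m n (Matrix.single p q 1) ∈ piOmega m n μ 2 := by
  apply smul_trick (c := μ j₀ i₀ * 1 * μ.conjTranspose i₀ j₀)
  · simp only [mul_one, conjTranspose_apply]
    exact mul_ne_zero h₀ (star_ne_zero.mpr h₀)
  · apply Submodule.subset_span
    refine ⟨(0, Matrix.single p j₀ 1), [(Matrix.single i₀ i₀ 1, 0),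
      (0, Matrix.single j₀ q 1)], rfl, ?_⟩
    simp only [List.map_cons, List.map_nil, List.prod_cons, List.prod_nil, mul_one]
    rw [comp8, piRep_right_mul]
    have key : Matrix.single p j₀ (1:ℂ) *
        (μ * (Matrix.single i₀ i₀ (1:ℂ) * (μ.conjTranspose * Matrix.single j₀ q (1:ℂ)))) =
        Matrix.single p q ((μ * Matrix.single i₀ i₀ (1:ℂ) * μ.conjTranspose) j₀ j₀) := by
      have := E_mul_mul_E (μ * Matrix.single i₀ i₀ (1:ℂ) * μ.conjTranspose) p j₀ j₀ q
      rw [← this]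
      simp [Matrix.mul_assoc]
    rw [key, mul_E_mul_apply]
    simp [botEmbed]

lemma diag_le_piOmega_two : diagSet m n ≤ piOmega m n μ 2 := by
  intro x hx
  rw [mem_diagSet_eq hx]
  have h1 : fromBlocks x.toBlocks₁₁ 0 0 0 ∈ piOmega m n μ 2 :=
    embed_mem_of_stdBasis (topEmbed m n) _ (fun i j => top_std_mem_omega2 h₀ i j) _
  have h2 : fromBlocks 0 0 0 x.toBlocks₂₂ ∈ piOmega m n μ 2 :=
    embed_mem_of_stdBasis (botEmbed m n) _ (fun i j => bot_std_mem_omega2 h₀ i j) _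
  have : fromBlocks x.toBlocks₁₁ (0 : Matrix (Fin m) (Fin n) ℂ) 0 x.toBlocks₂₂ =
      fromBlocks x.toBlocks₁₁ 0 0 0 + fromBlocks 0 0 0 x.toBlocks₂₂ := by
    rw [fromBlocks_add]; simp
  rw [this]
  exact Submodule.add_mem _ h1 h2

end diagmem

lemma stdBasisMatrix_sub' {I J : Type*} [DecidableEq I] [DecidableEq J] (i : I) (j : J)
    (x y : ℂ) : Matrix.single i j (x - y) = Matrix.single i j x - Matrix.single i j y := by
  ext a b
  simp only [Matrix.single, of_apply, Matrix.sub_apply]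
  split <;> simp

lemma stdBasisMatrix_neg' {I J : Type*} [DecidableEq I] [DecidableEq J] (i : I) (j : J)
    (x : ℂ) : Matrix.single i j (-x) = -Matrix.single i j x := by
  ext a b
  simp only [Matrix.single, of_apply, Matrix.neg_apply]
  split <;> simp

lemma not_scalar_cases {I : Type*} [Fintype I] [DecidableEq I] {N : Matrix I I ℂ}
    (h : ¬ ∃ c : ℂ, N = c • (1 : Matrix I I ℂ)) :
    (∃ j k, j ≠ k ∧ N j k ≠ 0) ∨ (∃ j k, N j j ≠ N k k) := by
  by_contra hc
  push_neg at hc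
  obtain ⟨hoff, hdiag⟩ := hc
  apply h
  rcases isEmpty_or_nonempty I with hI | hI
  · exact ⟨0, by ext i j; exact (hI.elim i)⟩
  · obtain ⟨i₀⟩ := hI
    refine ⟨N i₀ i₀, ?_⟩
    ext i j
    by_cases hij : i = j
    · subst hij
      simp [hdiag i i₀, Matrix.one_apply, Matrix.smul_apply]
    · simp [hoff i j hij, Matrix.one_apply, hij, Matrix.smul_apply]

section j2
variable (μ : Matrix (Fin n) (Fin m) ℂ)

/-- Construction A (top block): off-diagonal entry of μ*μ. -/
lemma constrA_top {j k : Fin m} (hjk : j ≠ k) (i l : Fin m) :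
    topEmbed m n (Matrix.single i l (-((μ.conjTranspose * μ) j k))) ∈ piJ m n μ 2 := by
  rw [piJ_succ]
  apply Submodule.subset_span
  refine ⟨1, fun _ => (Matrix.single i j 1, 0), fun _ => [(Matrix.single k l 1, 0)],
    fun _ => rfl, ?_, ?_⟩
  · simp only [Fin.sum_univ_one, List.map_cons, List.map_nil, List.prod_cons,
      List.prod_nil, mul_one, comp3]
    rw [← Matrix.mul_assoc, single_mul_single_of_ne (h := hjk)]
    simp
  · simp only [Fin.sum_univ_one, List.map_cons, List.map_nil, List.prod_cons,
      List.prod_nil, mul_one, comp5]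
    have k0 : Matrix.single i j (1:ℂ) * (Matrix.single k l (1:ℂ) * μ.conjTranspose) = 0 := by
      rw [← Matrix.mul_assoc, single_mul_single_of_ne (h := hjk), Matrix.zero_mul]
    have key : Matrix.single i j (1:ℂ) * (μ.conjTranspose * (μ * Matrix.single k l (1:ℂ))) =
        Matrix.single i l ((μ.conjTranspose * μ) j k) := by
      have := E_mul_mul_E (μ.conjTranspose * μ) i j k l
      rw [← this]
      simp [Matrix.mul_assoc]
    rw [key, k0]
    simp [topEmbed, fromBlocks_neg, stdBasisMatrix_neg']

/-- Construction B (top block): unequal diagonal entries of μ*μ. -/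
lemma constrB_top {j k : Fin m} (i l : Fin m) :
    topEmbed m n (Matrix.single i l
      ((μ.conjTranspose * μ) k k - (μ.conjTranspose * μ) j j)) ∈ piJ m n μ 2 := by
  rw [piJ_succ]
  apply Submodule.subset_span
  refine ⟨2, ![(Matrix.single i j 1, 0), (-(Matrix.single i k 1), 0)],
    ![[(Matrix.single j l 1, 0)], [(Matrix.single k l 1, 0)]], fun r => by fin_cases r <;> rfl,
    ?_, ?_⟩
  · simp only [Fin.sum_univ_two]
    simp only [Matrix.cons_val_zero, Matrix.cons_val_one, Matrix.head_cons, List.map_cons,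
      List.map_nil, List.prod_cons, List.prod_nil, mul_one, comp3]
    rw [← Matrix.mul_assoc, single_mul_single_same,
      ← Matrix.mul_assoc, Matrix.neg_mul, single_mul_single_same]
    rw [fromBlocks_add]
    simp
  · simp only [Fin.sum_univ_two]
    simp only [Matrix.cons_val_zero, Matrix.cons_val_one, Matrix.head_cons, List.map_cons,
      List.map_nil, List.prod_cons, List.prod_nil, mul_one, comp5]
    have k1 : Matrix.single i j (1:ℂ) * (μ.conjTranspose * (μ * Matrix.single j l (1:ℂ))) =
        Matrix.single i l ((μ.conjTranspose * μ) j j) := by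
      have := E_mul_mul_E (μ.conjTranspose * μ) i j j l
      rw [← this]; simp [Matrix.mul_assoc]
    have k2 : Matrix.single i k (1:ℂ) * (μ.conjTranspose * (μ * Matrix.single k l (1:ℂ))) =
        Matrix.single i l ((μ.conjTranspose * μ) k k) := by
      have := E_mul_mul_E (μ.conjTranspose * μ) i k k l
      rw [← this]; simp [Matrix.mul_assoc]
    have k3 : Matrix.single i j (1:ℂ) * (Matrix.single j l (1:ℂ) * μ.conjTranspose) =
        Matrix.single i l (1:ℂ) * μ.conjTranspose := by
      rw [← Matrix.mul_assoc, single_mul_single_same, mul_one]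
    have k4 : Matrix.single i k (1:ℂ) * (Matrix.single k l (1:ℂ) * μ.conjTranspose) =
        Matrix.single i l (1:ℂ) * μ.conjTranspose := by
      rw [← Matrix.mul_assoc, single_mul_single_same, mul_one]
    simp only [Matrix.neg_mul, Matrix.mul_neg, neg_neg, k1, k2, k3, k4]
    rw [fromBlocks_add]
    simp only [topEmbed, LinearMap.coe_mk, AddHom.coe_mk]
    rw [stdBasisMatrix_sub']
    abel

/-- Construction A (bottom block). -/
lemma constrA_bot {j k : Fin n} (hjk : j ≠ k) (i l : Fin n) :
    botEmbed m n (Matrix.single i l (-((μ * μ.conjTranspose) j k))) ∈ piJ m n μ 2 := by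
  rw [piJ_succ]
  apply Submodule.subset_span
  refine ⟨1, fun _ => (0, Matrix.single i j 1), fun _ => [(0, Matrix.single k l 1)],
    fun _ => rfl, ?_, ?_⟩
  · simp only [Fin.sum_univ_one, List.map_cons, List.map_nil, List.prod_cons,
      List.prod_nil, mul_one, comp4]
    rw [← Matrix.mul_assoc, single_mul_single_of_ne (h := hjk)]
    simp
  · simp only [Fin.sum_univ_one, List.map_cons, List.map_nil, List.prod_cons,
      List.prod_nil, mul_one, comp6]
    have k0 : Matrix.single i j (1:ℂ) * (Matrix.single k l (1:ℂ) * μ) = 0 := by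
      rw [← Matrix.mul_assoc, single_mul_single_of_ne (h := hjk), Matrix.zero_mul]
    have key : Matrix.single i j (1:ℂ) * (μ * (μ.conjTranspose * Matrix.single k l (1:ℂ))) =
        Matrix.single i l ((μ * μ.conjTranspose) j k) := by
      have := E_mul_mul_E (μ * μ.conjTranspose) i j k l
      rw [← this]
      simp [Matrix.mul_assoc]
    rw [key, k0]
    simp [botEmbed, fromBlocks_neg, stdBasisMatrix_neg']

/-- Construction B (bottom block). -/
lemma constrB_bot {j k : Fin n} (i l : Fin n) :
    botEmbed m n (Matrix.single i l
      ((μ * μ.conjTranspose) k k - (μ * μ.conjTranspose) j j)) ∈ piJ m n μ 2 := by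
  rw [piJ_succ]
  apply Submodule.subset_span
  refine ⟨2, ![(0, Matrix.single i j 1), (0, -(Matrix.single i k 1))],
    ![[(0, Matrix.single j l 1)], [(0, Matrix.single k l 1)]], fun r => by fin_cases r <;> rfl,
    ?_, ?_⟩
  · simp only [Fin.sum_univ_two]
    simp only [Matrix.cons_val_zero, Matrix.cons_val_one, Matrix.head_cons, List.map_cons,
      List.map_nil, List.prod_cons, List.prod_nil, mul_one, comp4]
    rw [← Matrix.mul_assoc, single_mul_single_same,
      ← Matrix.mul_assoc, Matrix.neg_mul, single_mul_single_same]
    rw [fromBlocks_add]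
    simp
  · simp only [Fin.sum_univ_two]
    simp only [Matrix.cons_val_zero, Matrix.cons_val_one, Matrix.head_cons, List.map_cons,
      List.map_nil, List.prod_cons, List.prod_nil, mul_one, comp6]
    have k1 : Matrix.single i j (1:ℂ) * (μ * (μ.conjTranspose * Matrix.single j l (1:ℂ))) =
        Matrix.single i l ((μ * μ.conjTranspose) j j) := by
      have := E_mul_mul_E (μ * μ.conjTranspose) i j j l
      rw [← this]; simp [Matrix.mul_assoc]
    have k2 : Matrix.single i k (1:ℂ) * (μ * (μ.conjTranspose * Matrix.single k l (1:ℂ))) =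
        Matrix.single i l ((μ * μ.conjTranspose) k k) := by
      have := E_mul_mul_E (μ * μ.conjTranspose) i k k l
      rw [← this]; simp [Matrix.mul_assoc]
    have k3 : Matrix.single i j (1:ℂ) * (Matrix.single j l (1:ℂ) * μ) =
        Matrix.single i l (1:ℂ) * μ := by
      rw [← Matrix.mul_assoc, single_mul_single_same, mul_one]
    have k4 : Matrix.single i k (1:ℂ) * (Matrix.single k l (1:ℂ) * μ) =
        Matrix.single i l (1:ℂ) * μ := by
      rw [← Matrix.mul_assoc, single_mul_single_same, mul_one]
    simp only [Matrix.neg_mul, Matrix.mul_neg, neg_neg, k1, k2, k3, k4]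
    rw [fromBlocks_add]
    simp only [botEmbed, LinearMap.coe_mk, AddHom.coe_mk]
    rw [stdBasisMatrix_sub']
    abel

end j2

section assembly
variable {μ : Matrix (Fin n) (Fin m) ℂ}

lemma diag_le_piJ_two
    (h1 : ¬ ∃ c : ℂ, μ.conjTranspose * μ = c • (1 : Matrix (Fin m) (Fin m) ℂ))
    (h2 : ¬ ∃ c : ℂ, μ * μ.conjTranspose = c • (1 : Matrix (Fin n) (Fin n) ℂ)) :
    diagSet m n ≤ piJ m n μ 2 := by
  have htop : ∀ (i l : Fin m), topEmbed m n (Matrix.single i l 1) ∈ piJ m n μ 2 := by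
    intro i l
    rcases not_scalar_cases h1 with ⟨j, k, hjk, hN⟩ | ⟨j, k, hN⟩
    · exact smul_trick _ _ (neg_ne_zero.mpr hN) (constrA_top μ hjk i l)
    · exact smul_trick _ _ (sub_ne_zero_of_ne (Ne.symm hN)) (constrB_top μ (j := j) (k := k) i l)
  have hbot : ∀ (i l : Fin n), botEmbed m n (Matrix.single i l 1) ∈ piJ m n μ 2 := by
    intro i l
    rcases not_scalar_cases h2 with ⟨j, k, hjk, hN⟩ | ⟨j, k, hN⟩
    · exact smul_trick _ _ (neg_ne_zero.mpr hN) (constrA_bot μ hjk i l)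
    · exact smul_trick _ _ (sub_ne_zero_of_ne (Ne.symm hN)) (constrB_bot μ (j := j) (k := k) i l)
  intro x hx
  rw [mem_diagSet_eq hx]
  have e1 : fromBlocks x.toBlocks₁₁ 0 0 0 ∈ piJ m n μ 2 :=
    embed_mem_of_stdBasis (topEmbed m n) _ htop _
  have e2 : fromBlocks 0 0 0 x.toBlocks₂₂ ∈ piJ m n μ 2 :=
    embed_mem_of_stdBasis (botEmbed m n) _ hbot _
  have : fromBlocks x.toBlocks₁₁ (0 : Matrix (Fin m) (Fin n) ℂ) 0 x.toBlocks₂₂ =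
      fromBlocks x.toBlocks₁₁ 0 0 0 + fromBlocks 0 0 0 x.toBlocks₂₂ := by
    rw [fromBlocks_add]; simp
  rw [this]
  exact Submodule.add_mem _ e1 e2

lemma piJ_two_le_diag : piJ m n μ 2 ≤ diagSet m n := by
  rw [piJ_succ, Submodule.span_le]
  rintro x ⟨s, a, l, hlen, hc, rfl⟩
  refine Submodule.sum_mem _ fun r _ => ?_
  obtain ⟨c, hc'⟩ := List.length_eq_one_iff.mp (hlen r)
  rw [hc']
  simp only [List.map_cons, List.map_nil, List.prod_cons, List.prod_nil, mul_one]
  exact mul_mem_diag_of_off_off (commM_mem_offSet μ _) (commM_mem_offSet μ _)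

lemma piJ_le_piOmega (k : ℕ) : piJ m n μ (k + 1) ≤ piOmega m n μ (k + 1) := by
  rw [piJ_succ, Submodule.span_le]
  rintro x ⟨s, a, l, hlen, hc, rfl⟩
  refine Submodule.sum_mem _ fun r _ => ?_
  apply Submodule.subset_span
  refine ⟨(1, 1), a r :: l r, by simp [hlen r], ?_⟩
  have h1 : piRep m n (1 : TwoPtAlg m n) = 1 := by
    rw [show (1 : TwoPtAlg m n) = (1, 1) from rfl]
    simp [piRep, fromBlocks_one]
  simp [h1, List.map_cons, List.prod_cons, piRep, fromBlocks_one]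

lemma piJ_mul_prod (k : ℕ) (rest : List (TwoPtAlg m n)) {x}
    (hx : x ∈ piJ m n μ (k + 1)) :
    x * ((rest.map (commM m n μ)).prod) ∈ piJ m n μ (k + rest.length + 1) := by
  rw [piJ_succ] at hx
  induction hx using Submodule.span_induction with
  | mem y hy =>
    obtain ⟨s, a, l, hlen, hc, rfl⟩ := hy
    rw [piJ_succ]
    apply Submodule.subset_span
    refine ⟨s, a, fun r => l r ++ rest, fun r => by simp [hlen r], ?_, ?_⟩
    · have : ∀ r : Fin s, piRep m n (a r) * (((l r ++ rest).map (commM m n μ)).prod) =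
          (piRep m n (a r) * ((l r).map (commM m n μ)).prod) * (rest.map (commM m n μ)).prod := by
        intro r
        rw [List.map_append, List.prod_append, Matrix.mul_assoc]
      simp only [this, ← Finset.sum_mul, hc, Matrix.zero_mul]
    · rw [Finset.sum_mul]
      congr 1
      ext r
      rw [List.map_append, List.prod_append, Matrix.mul_assoc]
  | zero => simpa using Submodule.zero_mem _
  | add y z _ _ hy hz => rw [add_mul]; exact Submodule.add_mem _ hy hz
  | smul c y _ hy => rw [smul_mul_assoc]; exact Submodule.smul_mem _ _ hy

end assembly

/-- Two-point case ii: if neither μ*μ nor μμ* is a scalar multiple of the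
identity, then π(Ω²𝒜) = π(𝒜) = π(J²), π(Ωᵏ𝒜) = π(Jᵏ) for all k ≥ 2 (so
Ω_Dᵏ𝒜 = 0 for k ≥ 2), Ω_D¹𝒜 = π(Ω¹𝒜) is the space of all block-off-diagonal
matrices (≅ ℂ^{m×n} ⊕ ℂ^{n×m} as an 𝒜-module), and the product of any two
elements of π(Ω¹𝒜) vanishes in Ω_D²𝒜, i.e. lies in π(J²). -/
theorem two_point_case_ii (μ : Matrix (Fin n) (Fin m) ℂ) (hμ : μ ≠ 0)
    (h1 : ¬ ∃ c : ℂ, μ.conjTranspose * μ = c • (1 : Matrix (Fin m) (Fin m) ℂ))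
    (h2 : ¬ ∃ c : ℂ, μ * μ.conjTranspose = c • (1 : Matrix (Fin n) (Fin n) ℂ)) :
    (piOmega m n μ 2 = piOmega m n μ 0 ∧ piOmega m n μ 0 = piJ m n μ 2) ∧
    (∀ k : ℕ, 2 ≤ k → piOmega m n μ k = piJ m n μ k) ∧
    (piOmega m n μ 1 = Submodule.span ℂ
      {x | ∃ (A : Matrix (Fin m) (Fin n) ℂ) (B : Matrix (Fin n) (Fin m) ℂ),
        x = Matrix.fromBlocks 0 A B 0}) ∧
    (∀ x ∈ piOmega m n μ 1, ∀ y ∈ piOmega m n μ 1, x * y ∈ piJ m n μ 2) := by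
  obtain ⟨j₀, i₀, h₀⟩ := exists_entry_ne hμ
  have hO0 : piOmega m n μ 0 = diagSet m n := piOmega_zero_eq μ
  have hO2 : piOmega m n μ 2 = diagSet m n :=
    le_antisymm (piOmega_two_le_diag μ) (diag_le_piOmega_two h₀)
  have hJ2 : piJ m n μ 2 = diagSet m n :=
    le_antisymm piJ_two_le_diag (diag_le_piJ_two h1 h2)
  have hO1 : piOmega m n μ 1 = offSet m n :=
    le_antisymm (piOmega_one_le_off μ) (off_le_piOmega_one h₀)
  refine ⟨⟨hO2.trans hO0.symm, hO0.trans hJ2.symm⟩, ?_, ?_, ?_⟩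
  · -- k ≥ 2
    intro k hk
    obtain ⟨k', rfl⟩ : ∃ k', k = k' + 2 := ⟨k - 2, by omega⟩
    apply le_antisymm
    · rw [piOmega, Submodule.span_le]
      rintro x ⟨a₀, l, hl, rfl⟩
      match l, hl with
      | c₁ :: c₂ :: rest, hl =>
        have hrest : rest.length = k' := by simpa using hl
        have hD : piRep m n a₀ * (commM m n μ c₁ * commM m n μ c₂) ∈ piJ m n μ 2 :=
          (diag_le_piJ_two h1 h2) (mul_mem_diag_of_diag_diag (piRep_mem_diagSet a₀)
            (mul_mem_diag_of_off_off (commM_mem_offSet μ c₁) (commM_mem_offSet μ c₂)))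
        have hmul := piJ_mul_prod 1 rest hD
        have harith : 1 + rest.length + 1 = k' + 2 := by omega
        rw [harith] at hmul
        have heq : piRep m n a₀ * ((List.map (commM m n μ) (c₁ :: c₂ :: rest)).prod) =
            (piRep m n a₀ * (commM m n μ c₁ * commM m n μ c₂)) *
              (rest.map (commM m n μ)).prod := by
          simp [List.map_cons, List.prod_cons, Matrix.mul_assoc]
        rw [heq]
        exact hmul
    · exact piJ_le_piOmega (k' + 1)
  · -- piOmega 1
    rw [hO1]
    apply le_antisymm
    · intro x hx
      apply Submodule.subset_span
      exact ⟨x.toBlocks₁₂, x.toBlocks₂₁, mem_offSet_eq hx⟩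
    · rw [Submodule.span_le]
      rintro x ⟨A, B, rfl⟩
      exact fromBlocks_mem_offSet A B
  · intro x hx y hy
    rw [hO1] at hx hy
    exact (diag_le_piJ_two h1 h2) (mul_mem_diag_of_off_off hx hy)

end
end

section
/- For 𝒜 = M_m(ℂ) ⊕ M_n(ℂ), m ≤ n, with ℳ = [[0, μ*],[μ, 0]] where μ*μ = λ·1_m (λ > 0) but μμ* is not proportional to 1_n: J² equals the block-diagonal matrices of the form diag(0, b) with b ∈ M_n(ℂ), the quotient Ω_D²𝒜 is isomorphic to {diag(a, 0) : a ∈ M_m(ℂ)}, and Ω_Dᵏ𝒜 = 0 for all k ≥ 3. -/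
open Matrix

noncomputable section

variable (m n : ℕ)

namespace TwoPtHelper

variable {m n : ℕ}

/-- generic: rank-one matrix lemmas -/
theorem mul_vecMulVec {p q r : Type*} [Fintype q] (M : Matrix p q ℂ) (u : q → ℂ) (ψ : r → ℂ) :
    M * vecMulVec u ψ = vecMulVec (M *ᵥ u) ψ := by
  ext i j
  simp [Matrix.mul_apply, vecMulVec_apply, Matrix.mulVec, dotProduct,
    Finset.sum_mul, mul_assoc]

theorem vecMulVec_mulVec {p q : Type*} [Fintype q] (u : p → ℂ) (ψ : q → ℂ) (x : q → ℂ) :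
    vecMulVec u ψ *ᵥ x = (ψ ⬝ᵥ x) • u := by
  ext i
  simp only [Matrix.mulVec, vecMulVec_apply, dotProduct, Pi.smul_apply, smul_eq_mul,
    Finset.sum_mul]
  exact Finset.sum_congr rfl (fun k _ => by ring)

theorem matrix_eq_sum_rankone {p q : Type*} [Fintype p] [Fintype q] [DecidableEq q]
    (X : Matrix p q ℂ) :
    X = ∑ j : q, vecMulVec (fun i => X i j) (Pi.single j 1) := by
  ext i j'
  rw [Matrix.sum_apply]
  simp [vecMulVec_apply, Pi.single_apply, Finset.sum_ite_eq]


open scoped ComplexOrder in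
theorem star_dp_self_ne_zero {q : ℕ} {v : Fin q → ℂ} (hv : v ≠ 0) : star v ⬝ᵥ v ≠ 0 :=
  fun h => hv (dotProduct_star_self_eq_zero.mp h)

/-- every-vector-eigen implies scalar -/
theorem eq_smul_one_of_all_eigen {q : ℕ} (ν : Matrix (Fin q) (Fin q) ℂ)
    (H : ∀ v : Fin q → ℂ, ∃ c : ℂ, ν *ᵥ v = c • v) :
    ∃ c : ℂ, ν = c • (1 : Matrix (Fin q) (Fin q) ℂ) := by
  rcases Nat.eq_zero_or_pos q with hq | hq
  · subst hq
    exact ⟨0, by ext i; exact absurd i.2 (by omega)⟩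
  · set j0 : Fin q := ⟨0, hq⟩
    have col : ∀ j : Fin q, ∃ cj : ℂ, (∀ i, ν i j = if i = j then cj else 0) := by
      intro j
      obtain ⟨cj, hcj⟩ := H (Pi.single j 1)
      refine ⟨cj, fun i => ?_⟩
      have := congrFun hcj i
      simpa [Matrix.mulVec_single, Pi.single_apply] using this
    choose cf hcf using col
    have same : ∀ j : Fin q, cf j = cf j0 := by
      intro j
      rcases eq_or_ne j j0 with h | h
      · rw [h]
      · obtain ⟨d, hd⟩ := H (Pi.single j 1 + Pi.single j0 1)
        have h1 := congrFun hd j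
        have h2 := congrFun hd j0
        have e1 : ∀ i, (ν *ᵥ (Pi.single j 1 + Pi.single j0 1)) i = ν i j + ν i j0 := by
          intro i
          simp [Matrix.mulVec_add, Matrix.mulVec_single, Pi.single_apply]
        rw [e1 j, hcf j j, hcf j0 j, if_pos rfl, if_neg h] at h1
        rw [e1 j0, hcf j j0, hcf j0 j0, if_pos rfl, if_neg (Ne.symm h)] at h2
        simp [Pi.single_apply, h, Ne.symm h] at h1 h2
        rw [h1, h2]
    refine ⟨cf j0, ?_⟩
    ext i j
    rw [hcf j i, Matrix.smul_apply, Matrix.one_apply]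
    rcases eq_or_ne i j with h | h
    · simp [h, same j]
    · simp [h]

/-- from nonscalar get v and dual functional -/
theorem exists_vec_phi {q : ℕ} (ν : Matrix (Fin q) (Fin q) ℂ)
    (h2 : ¬ ∃ c : ℂ, ν = c • (1 : Matrix (Fin q) (Fin q) ℂ)) :
    ∃ (v φ : Fin q → ℂ), φ ⬝ᵥ v = 0 ∧ φ ⬝ᵥ (ν *ᵥ v) = 1 := by
  have : ¬ ∀ v : Fin q → ℂ, ∃ c : ℂ, ν *ᵥ v = c • v := fun H => h2 (eq_smul_one_of_all_eigen ν H)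
  push_neg at this
  obtain ⟨v, hv⟩ := this
  have hv0 : v ≠ 0 := by
    rintro rfl
    exact hv 0 (by simp)
  set w : Fin q → ℂ := ν *ᵥ v with hw
  set d : ℂ := star v ⬝ᵥ v with hd
  have hd0 : d ≠ 0 := star_dp_self_ne_zero hv0
  set s : ℂ := star v ⬝ᵥ w with hs
  set w' : Fin q → ℂ := d • w - s • v with hw'
  have hw'0 : w' ≠ 0 := by
    intro h
    apply hv (d⁻¹ * s)
    have hde : d • w = s • v := by
      have := sub_eq_zero.mp (by rw [← hw']; exact h)
      exact this
    show w = (d⁻¹ * s) • v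
    rw [mul_smul, ← hde, smul_smul, inv_mul_cancel₀ hd0, one_smul]
  -- star w' ⬝ᵥ v = 0
  have conj_dp : ∀ (a b : Fin q → ℂ), star a ⬝ᵥ b = star (star b ⬝ᵥ a) := by
    intro a b
    simp [dotProduct, Finset.sum_comm, map_sum, mul_comm]
  have hdstar : star d = d := by
    simp [hd, dotProduct, map_sum, mul_comm]
  have hsv : star w' ⬝ᵥ v = 0 := by
    have : star w' = star d • star w - star s • star v := by
      rw [hw']; ext i; simp [star_sub, star_smul]
    rw [this, sub_dotProduct, smul_dotProduct, smul_dotProduct]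
    have e1 : star w ⬝ᵥ v = star s := by rw [hs, conj_dp v w, star_star]
    have e2 : star v ⬝ᵥ v = d := hd.symm
    rw [e1, e2, hdstar]
    simp [smul_eq_mul]
    ring
  have hww' : star w' ⬝ᵥ w' ≠ 0 := star_dp_self_ne_zero hw'0
  set c0 : ℂ := star w' ⬝ᵥ w with hc0
  have hc00 : c0 ≠ 0 := by
    intro h
    apply hww'
    rw [hw', dotProduct_sub, dotProduct_smul, dotProduct_smul, ← hc0,
      hsv, h]
    simp
  refine ⟨v, c0⁻¹ • star w', ?_, ?_⟩
  · rw [smul_dotProduct, hsv]; simp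
  · rw [smul_dotProduct, ← hw, ← hc0]
    simp [inv_mul_cancel₀ hc00]


variable (m n : ℕ) (μ : Matrix (Fin n) (Fin m) ℂ)

def U (a : TwoPtAlg m n) : Matrix (Fin m) (Fin n) ℂ := μ.conjTranspose * a.2 - a.1 * μ.conjTranspose
def L (a : TwoPtAlg m n) : Matrix (Fin n) (Fin m) ℂ := μ * a.1 - a.2 * μ

theorem piRep_eq (a : TwoPtAlg m n) : piRep m n a = fromBlocks a.1 0 0 a.2 := rfl

theorem fromBlocks_sub' {l o p q : Type*} (A C : Matrix l p ℂ) (B D : Matrix l q ℂ)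
    (A' C' : Matrix o p ℂ) (B' D' : Matrix o q ℂ) :
    fromBlocks A B A' B' - fromBlocks C D C' D' = fromBlocks (A - C) (B - D) (A' - C') (B' - D') := by
  ext (i|i) (j|j) <;> simp [Matrix.fromBlocks]

theorem commM_eq (a : TwoPtAlg m n) :
    commM m n μ a = fromBlocks 0 (U m n μ a) (L m n μ a) 0 := by
  simp only [commM, piRep, diracM, Matrix.fromBlocks_multiply, U, L]
  simp [fromBlocks_sub']

theorem mul_od_od (A : Matrix (Fin m) (Fin n) ℂ) (B : Matrix (Fin n) (Fin m) ℂ)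
    (C : Matrix (Fin m) (Fin n) ℂ) (D : Matrix (Fin n) (Fin m) ℂ) :
    fromBlocks 0 A B 0 * fromBlocks 0 C D 0 = fromBlocks (A * D) 0 0 (B * C) := by
  simp [Matrix.fromBlocks_multiply]

theorem mul_dg_dg (P P' : Matrix (Fin m) (Fin m) ℂ) (Q Q' : Matrix (Fin n) (Fin n) ℂ) :
    fromBlocks P 0 0 Q * fromBlocks P' 0 0 Q' = fromBlocks (P * P') 0 0 (Q * Q') := by
  simp [Matrix.fromBlocks_multiply]

theorem mul_dg_od (P : Matrix (Fin m) (Fin m) ℂ) (Q : Matrix (Fin n) (Fin n) ℂ)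
    (C : Matrix (Fin m) (Fin n) ℂ) (D : Matrix (Fin n) (Fin m) ℂ) :
    fromBlocks P 0 0 Q * fromBlocks 0 C D 0 = fromBlocks 0 (P * C) (Q * D) 0 := by
  simp [Matrix.fromBlocks_multiply]

theorem mul_od_dg (A : Matrix (Fin m) (Fin n) ℂ) (B : Matrix (Fin n) (Fin m) ℂ)
    (P : Matrix (Fin m) (Fin m) ℂ) (Q : Matrix (Fin n) (Fin n) ℂ) :
    fromBlocks 0 A B 0 * fromBlocks P 0 0 Q = fromBlocks 0 (A * Q) (B * P) 0 := by
  simp [Matrix.fromBlocks_multiply]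

/-- block-diagonal submodule -/
def dg : Submodule ℂ (Matrix (Fin m ⊕ Fin n) (Fin m ⊕ Fin n) ℂ) where
  carrier := {x | x.toBlocks₁₂ = 0 ∧ x.toBlocks₂₁ = 0}
  add_mem' := by
    rintro x y ⟨hx1, hx2⟩ ⟨hy1, hy2⟩
    constructor <;> ext i j <;>
      simp_all [Matrix.toBlocks₁₂, Matrix.toBlocks₂₁, ← Matrix.ext_iff]
  zero_mem' := by constructor <;> ext i j <;> simp [Matrix.toBlocks₁₂, Matrix.toBlocks₂₁]
  smul_mem' := by
    rintro c x ⟨hx1, hx2⟩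
    constructor <;> ext i j <;>
      simp_all [Matrix.toBlocks₁₂, Matrix.toBlocks₂₁, ← Matrix.ext_iff]

/-- off-diagonal submodule -/
def od : Submodule ℂ (Matrix (Fin m ⊕ Fin n) (Fin m ⊕ Fin n) ℂ) where
  carrier := {x | x.toBlocks₁₁ = 0 ∧ x.toBlocks₂₂ = 0}
  add_mem' := by
    rintro x y ⟨hx1, hx2⟩ ⟨hy1, hy2⟩
    constructor <;> ext i j <;>
      simp_all [Matrix.toBlocks₁₁, Matrix.toBlocks₂₂, ← Matrix.ext_iff]
  zero_mem' := by constructor <;> ext i j <;> simp [Matrix.toBlocks₁₁, Matrix.toBlocks₂₂]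
  smul_mem' := by
    rintro c x ⟨hx1, hx2⟩
    constructor <;> ext i j <;>
      simp_all [Matrix.toBlocks₁₁, Matrix.toBlocks₂₂, ← Matrix.ext_iff]

theorem mem_dg_iff (x) : x ∈ dg m n ↔ ∃ P Q, x = fromBlocks P 0 0 Q := by
  constructor
  · rintro ⟨h1, h2⟩
    refine ⟨x.toBlocks₁₁, x.toBlocks₂₂, ?_⟩
    conv_lhs => rw [← Matrix.fromBlocks_toBlocks x, h1, h2]
  · rintro ⟨P, Q, rfl⟩
    exact ⟨Matrix.toBlocks_fromBlocks₁₂ _ _ _ _, Matrix.toBlocks_fromBlocks₂₁ _ _ _ _⟩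

theorem mem_od_iff (x) : x ∈ od m n ↔ ∃ A B, x = fromBlocks 0 A B 0 := by
  constructor
  · rintro ⟨h1, h2⟩
    refine ⟨x.toBlocks₁₂, x.toBlocks₂₁, ?_⟩
    conv_lhs => rw [← Matrix.fromBlocks_toBlocks x, h1, h2]
  · rintro ⟨A, B, rfl⟩
    exact ⟨Matrix.toBlocks_fromBlocks₁₁ _ _ _ _, Matrix.toBlocks_fromBlocks₂₂ _ _ _ _⟩


theorem prod_blocks (l : List (TwoPtAlg m n)) :
    (Even l.length → (l.map (commM m n μ)).prod ∈ dg m n) ∧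
    (¬ Even l.length → (l.map (commM m n μ)).prod ∈ od m n) := by
  induction l with
  | nil =>
    refine ⟨fun _ => ?_, fun h => absurd (by simp : Even ([] : List (TwoPtAlg m n)).length) h⟩
    rw [mem_dg_iff]
    exact ⟨1, 1, by simp [Matrix.fromBlocks_one]⟩
  | cons a t ih =>
    have hc := commM_eq m n μ a
    constructor
    · intro h
      have ht : ¬ Even t.length := by
        simpa [Nat.even_add_one] using h
      obtain ⟨A, B, hAB⟩ := (mem_od_iff m n _).mp (ih.2 ht)
      rw [mem_dg_iff]
      refine ⟨U m n μ a * B, L m n μ a * A, ?_⟩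
      simp only [List.map_cons, List.prod_cons, hAB, hc]
      rw [mul_od_od]
    · intro h
      have ht : Even t.length := by
        by_contra ht
        exact h (by simpa [Nat.even_add_one] using ht)
      obtain ⟨P, Q, hPQ⟩ := (mem_dg_iff m n _).mp (ih.1 ht)
      rw [mem_od_iff]
      refine ⟨U m n μ a * Q, L m n μ a * P, ?_⟩
      simp only [List.map_cons, List.prod_cons, hPQ, hc]
      rw [mul_od_dg]

theorem piOmega_le_dg {k : ℕ} (hk : Even k) : piOmega m n μ k ≤ dg m n := by
  rw [piOmega, Submodule.span_le]
  rintro x ⟨a₀, l, hl, rfl⟩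
  obtain ⟨P, Q, hPQ⟩ := (mem_dg_iff m n _).mp ((prod_blocks m n μ l).1 (hl ▸ hk))
  show _ ∈ dg m n
  rw [mem_dg_iff]
  exact ⟨a₀.1 * P, a₀.2 * Q, by rw [hPQ, piRep_eq, mul_dg_dg]⟩

theorem piOmega_le_od {k : ℕ} (hk : ¬ Even k) : piOmega m n μ k ≤ od m n := by
  rw [piOmega, Submodule.span_le]
  rintro x ⟨a₀, l, hl, rfl⟩
  obtain ⟨A, B, hAB⟩ := (mem_od_iff m n _).mp ((prod_blocks m n μ l).2 (hl ▸ hk))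
  show _ ∈ od m n
  rw [mem_od_iff]
  exact ⟨a₀.1 * A, a₀.2 * B, by rw [hAB, piRep_eq, mul_dg_od]⟩


theorem piJ_le_piOmega (k : ℕ) : piJ m n μ k ≤ piOmega m n μ k := by
  cases k with
  | zero => exact bot_le
  | succ j =>
    rw [piJ, Submodule.span_le]
    rintro x ⟨s, a, l, hlen, hsum, rfl⟩
    apply Submodule.sum_mem
    intro r _
    apply Submodule.subset_span
    refine ⟨(1, 1), a r :: l r, by simp [hlen r], ?_⟩
    have h1 : piRep m n ((1 : Matrix (Fin m) (Fin m) ℂ), (1 : Matrix (Fin n) (Fin n) ℂ)) = 1 := by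
      rw [piRep_eq]
      exact Matrix.fromBlocks_one
    rw [List.map_cons, List.prod_cons, h1, one_mul]

theorem mulJ {k : ℕ} (hk : 1 ≤ k) {x} (hx : x ∈ piJ m n μ k) (a : TwoPtAlg m n) :
    x * commM m n μ a ∈ piJ m n μ (k + 1) := by
  obtain ⟨j, rfl⟩ : ∃ j, k = j + 1 := ⟨k - 1, by omega⟩
  rw [piJ] at hx
  induction hx using Submodule.span_induction with
  | mem x hxx =>
    obtain ⟨s, b, l, hlen, hsum, rfl⟩ := hxx
    rw [piJ]
    apply Submodule.subset_span
    refine ⟨s, b, fun r => l r ++ [a], fun r => by simp [hlen r], ?_, ?_⟩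
    · have : ∀ r : Fin s, piRep m n (b r) * ((l r ++ [a]).map (commM m n μ)).prod
          = (piRep m n (b r) * ((l r).map (commM m n μ)).prod) * commM m n μ a := by
        intro r
        rw [List.map_append, List.prod_append, List.map_singleton, List.prod_singleton, mul_assoc]
      rw [Finset.sum_congr rfl (fun r _ => this r), ← Finset.sum_mul, hsum, zero_mul]
    · rw [Finset.sum_mul]
      refine Finset.sum_congr rfl (fun r _ => ?_)
      rw [List.map_append, List.prod_append, List.map_singleton, List.prod_singleton, mul_assoc]
  | zero => rw [zero_mul]; exact Submodule.zero_mem _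
  | add x y hx hy ihx ihy => rw [add_mul]; exact Submodule.add_mem _ ihx ihy
  | smul c x hx ihx => rw [smul_mul_assoc]; exact Submodule.smul_mem _ _ ihx


theorem fb_eq {A A' : Matrix (Fin m) (Fin m) ℂ} {B B' : Matrix (Fin m) (Fin n) ℂ}
    {C C' : Matrix (Fin n) (Fin m) ℂ} {D D' : Matrix (Fin n) (Fin n) ℂ}
    (h1 : A = A') (h2 : B = B') (h3 : C = C') (h4 : D = D') :
    fromBlocks A B C D = fromBlocks A' B' C' D' := by
  rw [h1, h2, h3, h4]

def lrsub : Submodule ℂ (Matrix (Fin m ⊕ Fin n) (Fin m ⊕ Fin n) ℂ) where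
  carrier := {x | ∃ b : Matrix (Fin n) (Fin n) ℂ, x = fromBlocks 0 0 0 b}
  add_mem' := by
    rintro x y ⟨b, rfl⟩ ⟨b', rfl⟩
    exact ⟨b + b', by rw [Matrix.fromBlocks_add]; apply fb_eq <;> simp⟩
  zero_mem' := ⟨0, by rw [Matrix.fromBlocks_zero]⟩
  smul_mem' := by
    rintro c x ⟨b, rfl⟩
    exact ⟨c • b, by rw [Matrix.fromBlocks_smul]; apply fb_eq <;> simp⟩

def ulsub : Submodule ℂ (Matrix (Fin m ⊕ Fin n) (Fin m ⊕ Fin n) ℂ) where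
  carrier := {x | ∃ a : Matrix (Fin m) (Fin m) ℂ, x = fromBlocks a 0 0 0}
  add_mem' := by
    rintro x y ⟨b, rfl⟩ ⟨b', rfl⟩
    exact ⟨b + b', by rw [Matrix.fromBlocks_add]; apply fb_eq <;> simp⟩
  zero_mem' := ⟨0, by rw [Matrix.fromBlocks_zero]⟩
  smul_mem' := by
    rintro c x ⟨b, rfl⟩
    exact ⟨c • b, by rw [Matrix.fromBlocks_smul]; apply fb_eq <;> simp⟩

theorem span_lr : Submodule.span ℂ {x : Matrix (Fin m ⊕ Fin n) (Fin m ⊕ Fin n) ℂ |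
    ∃ b : Matrix (Fin n) (Fin n) ℂ, x = fromBlocks 0 0 0 b} = lrsub m n :=
  le_antisymm (Submodule.span_le.mpr (fun x hx => hx)) Submodule.subset_span

theorem span_ul : Submodule.span ℂ {x : Matrix (Fin m ⊕ Fin n) (Fin m ⊕ Fin n) ℂ |
    ∃ a : Matrix (Fin m) (Fin m) ℂ, x = fromBlocks a 0 0 0} = ulsub m n :=
  le_antisymm (Submodule.span_le.mpr (fun x hx => hx)) Submodule.subset_span



theorem mu_ne_zero (h2 : ¬ ∃ c : ℂ, μ * μ.conjTranspose = c • (1 : Matrix (Fin n) (Fin n) ℂ)) :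
    μ ≠ 0 := fun h => h2 ⟨0, by simp [h]⟩

theorem m_pos (h2 : ¬ ∃ c : ℂ, μ * μ.conjTranspose = c • (1 : Matrix (Fin n) (Fin n) ℂ)) :
    0 < m := by
  by_contra h
  apply mu_ne_zero m n μ h2
  ext i j
  exact absurd j.2 (by omega)

section WithLam

variable (lam : ℝ)

/-- J² witness -/
theorem W2 (B b : Matrix (Fin n) (Fin n) ℂ) :
    fromBlocks 0 0 0 (B * (b * (μ * μ.conjTranspose) - (μ * μ.conjTranspose) * b)) ∈
      piJ m n μ 2 := by
  rw [show (2:ℕ) = 1 + 1 from rfl, piJ]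
  apply Submodule.subset_span
  refine ⟨2, ![((0 : Matrix (Fin m) (Fin m) ℂ), B), (0, -(B*b))],
    ![[((0 : Matrix (Fin m) (Fin m) ℂ), b)], [((0 : Matrix (Fin m) (Fin m) ℂ), (1 : Matrix (Fin n) (Fin n) ℂ))]],
    fun r => by fin_cases r <;> simp, ?_, ?_⟩
  · rw [Fin.sum_univ_two]
    simp only [Matrix.cons_val_zero, Matrix.cons_val_one, Matrix.head_cons,
      List.map_singleton, List.prod_singleton]
    rw [piRep_eq, piRep_eq, commM_eq, commM_eq, mul_dg_od, mul_dg_od, Matrix.fromBlocks_add,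
      ← Matrix.fromBlocks_zero]
    apply fb_eq <;> (simp [U, L, Matrix.mul_assoc, mul_add, add_mul, mul_neg, neg_mul, mul_sub, sub_mul, Matrix.mul_smul, Matrix.smul_mul]; try abel)
  · rw [Fin.sum_univ_two]
    simp only [Matrix.cons_val_zero, Matrix.cons_val_one, Matrix.head_cons,
      List.map_singleton, List.prod_singleton]
    rw [commM_eq, commM_eq, commM_eq, commM_eq, mul_od_od, mul_od_od, Matrix.fromBlocks_add]
    apply fb_eq <;> (simp [U, L, Matrix.mul_assoc, mul_add, add_mul, mul_neg, neg_mul, mul_sub, sub_mul, Matrix.mul_smul, Matrix.smul_mul]; try abel)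


theorem Tspan_top (h2 : ¬ ∃ c : ℂ, μ * μ.conjTranspose = c • (1 : Matrix (Fin n) (Fin n) ℂ)) :
    Submodule.span ℂ {X : Matrix (Fin n) (Fin n) ℂ | ∃ B b, X =
      B * (b * (μ * μ.conjTranspose) - (μ * μ.conjTranspose) * b)} = ⊤ := by
  set ν := μ * μ.conjTranspose with hν
  obtain ⟨v, φ, hφv, hφνv⟩ := exists_vec_phi ν h2
  rw [eq_top_iff]
  intro X _
  have rank1 : ∀ (y ψ : Fin n → ℂ), vecMulVec y ψ ∈ Submodule.span ℂ
      {X : Matrix (Fin n) (Fin n) ℂ | ∃ B b, X = B * (b * ν - ν * b)} := by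
    intro y ψ
    set B := vecMulVec y φ with hB
    set b := vecMulVec v ψ with hb
    have e1 : B * b = 0 := by
      rw [hB, hb, mul_vecMulVec, vecMulVec_mulVec, hφv, zero_smul]
      ext i j; simp [vecMulVec_apply]
    have e2 : B * ν * b = vecMulVec y ψ := by
      rw [hb, mul_vecMulVec]
      congr 1
      rw [← Matrix.mulVec_mulVec, hB, vecMulVec_mulVec, hφνv, one_smul]
    have e3 : B * (b * ν - ν * b) = -(vecMulVec y ψ) := by
      rw [mul_sub, show B * (b * ν) = B * b * ν from (Matrix.mul_assoc _ _ _).symm, e1,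
        Matrix.zero_mul, show B * (ν * b) = B * ν * b from (Matrix.mul_assoc _ _ _).symm, e2,
        zero_sub]
    have hg : B * (b * ν - ν * b) ∈ Submodule.span ℂ
        {X : Matrix (Fin n) (Fin n) ℂ | ∃ B b, X = B * (b * ν - ν * b)} :=
      Submodule.subset_span ⟨B, b, rfl⟩
    rw [e3] at hg
    simpa using Submodule.neg_mem _ hg
  rw [matrix_eq_sum_rankone X]
  exact Submodule.sum_mem _ (fun j _ => rank1 _ _)


theorem lr_le_piJ2 (h2 : ¬ ∃ c : ℂ, μ * μ.conjTranspose = c • (1 : Matrix (Fin n) (Fin n) ℂ)) :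
    lrsub m n ≤ piJ m n μ 2 := by
  rintro x ⟨T, rfl⟩
  have hT : T ∈ Submodule.span ℂ {X : Matrix (Fin n) (Fin n) ℂ | ∃ B b, X =
      B * (b * (μ * μ.conjTranspose) - (μ * μ.conjTranspose) * b)} := by
    rw [Tspan_top m n μ h2]; trivial
  induction hT using Submodule.span_induction with
  | mem X hX => obtain ⟨B, b, rfl⟩ := hX; exact W2 m n μ B b
  | zero => rw [Matrix.fromBlocks_zero]; exact Submodule.zero_mem _
  | add X Y hX hY ihX ihY =>
    have : fromBlocks (0 : Matrix (Fin m) (Fin m) ℂ) 0 0 (X + Y) =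
        fromBlocks 0 0 0 X + fromBlocks 0 0 0 Y := by
      rw [Matrix.fromBlocks_add]; apply fb_eq <;> simp
    rw [this]; exact Submodule.add_mem _ ihX ihY
  | smul c X hX ihX =>
    have : fromBlocks (0 : Matrix (Fin m) (Fin m) ℂ) 0 0 (c • X) =
        c • fromBlocks 0 0 0 X := by
      rw [Matrix.fromBlocks_smul]; apply fb_eq <;> simp
    rw [this]; exact Submodule.smul_mem _ _ ihX

theorem sum_fb {ι : Type*} [Fintype ι] (f : ι → Matrix (Fin m) (Fin m) ℂ) (g : ι → Matrix (Fin m) (Fin n) ℂ)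
    (h : ι → Matrix (Fin n) (Fin m) ℂ) (k : ι → Matrix (Fin n) (Fin n) ℂ) :
    ∑ r, fromBlocks (f r) (g r) (h r) (k r) =
      fromBlocks (∑ r, f r) (∑ r, g r) (∑ r, h r) (∑ r, k r) := by
  ext (i | i) (j | j) <;> simp [Matrix.sum_apply, Matrix.fromBlocks]

section WithLam2

variable (lam : ℝ) (h1 : μ.conjTranspose * μ = (lam : ℂ) • (1 : Matrix (Fin m) (Fin m) ℂ))
include h1

theorem key_id (a c : TwoPtAlg m n) :
    U m n μ a * L m n μ c = μ.conjTranspose * (a.2 * L m n μ c) + (a.1 * U m n μ c) * μ := by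
  have hA : a.1 * (μ.conjTranspose * (μ * c.1)) = a.1 * (c.1 * (μ.conjTranspose * μ)) := by
    simp [← Matrix.mul_assoc, h1, Matrix.smul_mul, Matrix.mul_smul]
  simp only [U, L, Matrix.sub_mul, Matrix.mul_sub, Matrix.mul_assoc]
  rw [hA]
  abel

theorem piJ2_le_lr : piJ m n μ 2 ≤ lrsub m n := by
  rw [show (2:ℕ) = 1 + 1 from rfl, piJ, Submodule.span_le]
  rintro x ⟨s, a, l, hlen, hsum, rfl⟩
  have hc : ∀ r : Fin s, ∃ cr : TwoPtAlg m n, l r = [cr] := fun r =>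
    List.length_eq_one_iff.mp (hlen r)
  choose c hcl using hc
  have hterm : ∀ r : Fin s, piRep m n (a r) * ((l r).map (commM m n μ)).prod =
      fromBlocks 0 ((a r).1 * U m n μ (c r)) ((a r).2 * L m n μ (c r)) 0 := by
    intro r
    rw [hcl r, List.map_singleton, List.prod_singleton, piRep_eq, commM_eq, mul_dg_od]
  rw [Finset.sum_congr rfl (fun r _ => hterm r), sum_fb] at hsum
  have hU : (∑ r, (a r).1 * U m n μ (c r)) = 0 := by
    have := congrArg Matrix.toBlocks₁₂ hsum
    rw [Matrix.toBlocks_fromBlocks₁₂] at this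
    exact this.trans (by ext i j; rfl)
  have hL : (∑ r, (a r).2 * L m n μ (c r)) = 0 := by
    have := congrArg Matrix.toBlocks₂₁ hsum
    rw [Matrix.toBlocks_fromBlocks₂₁] at this
    exact this.trans (by ext i j; rfl)
  have hterm2 : ∀ r : Fin s, commM m n μ (a r) * ((l r).map (commM m n μ)).prod =
      fromBlocks (U m n μ (a r) * L m n μ (c r)) 0 0 (L m n μ (a r) * U m n μ (c r)) := by
    intro r
    rw [hcl r, List.map_singleton, List.prod_singleton, commM_eq, commM_eq, mul_od_od]
  rw [Finset.sum_congr rfl (fun r _ => hterm2 r), sum_fb]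
  refine ⟨∑ r, L m n μ (a r) * U m n μ (c r), fb_eq m n ?_ (by simp) (by simp) rfl⟩
  rw [Finset.sum_congr rfl (fun r _ => key_id m n μ lam h1 (a r) (c r)), Finset.sum_add_distrib,
    ← Matrix.mul_sum, ← Matrix.sum_mul, hU, hL, Matrix.mul_zero, Matrix.zero_mul, add_zero]



variable (hlam : (lam : ℂ) ≠ 0)
include hlam

theorem muH_rank1 (x0 : Fin m → ℂ) (ψ : Fin n → ℂ) :
    μ.conjTranspose * vecMulVec (μ *ᵥ x0) ψ = (lam : ℂ) • vecMulVec x0 ψ := by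
  rw [mul_vecMulVec, Matrix.mulVec_mulVec, h1, Matrix.smul_mulVec, Matrix.one_mulVec]
  ext i j
  simp [vecMulVec_apply, smul_eq_mul, mul_assoc]

/-- 3-form upper-block witness -/
theorem W3upper (A : Matrix (Fin m) (Fin m) ℂ) (b₁ b₂ : Matrix (Fin n) (Fin n) ℂ)
    (h12 : b₁ * b₂ = 0) :
    fromBlocks 0 (A * (μ.conjTranspose * (b₁ * (μ * (μ.conjTranspose * b₂))))) 0 0 ∈
      piJ m n μ 3 := by
  have h12' : ∀ (Z : Matrix (Fin n) (Fin m) ℂ), b₁ * (b₂ * Z) = 0 := by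
    intro Z
    rw [← Matrix.mul_assoc, h12, Matrix.zero_mul]
  have e0 : U m n μ (0, b₁) * L m n μ (0, b₂) = 0 := by
    simp [U, L, Matrix.mul_assoc, h12']
  rw [show (3:ℕ) = 2 + 1 from rfl, piJ]
  apply Submodule.subset_span
  refine ⟨1, ![(A, 0)], ![[((0 : Matrix (Fin m) (Fin m) ℂ), b₁),
      ((0 : Matrix (Fin m) (Fin m) ℂ), b₂)]], fun r => by fin_cases r <;> simp, ?_, ?_⟩
  · rw [Fin.sum_univ_one]
    simp only [Matrix.cons_val_zero, List.map_cons, List.map_nil, List.prod_cons,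
      List.prod_nil, mul_one]
    rw [commM_eq, commM_eq, mul_od_od, e0, piRep_eq, mul_dg_dg, ← Matrix.fromBlocks_zero]
    apply fb_eq <;> simp
  · rw [Fin.sum_univ_one]
    simp only [Matrix.cons_val_zero, List.map_cons, List.map_nil, List.prod_cons,
      List.prod_nil, mul_one]
    rw [commM_eq, commM_eq, commM_eq, mul_od_od, e0, mul_od_dg]
    refine fb_eq m n rfl ?_ (by simp) rfl
    simp [U, L, Matrix.mul_assoc]


omit h1 hlam in
theorem vecMulVec_zero_left {p q : Type*} (ψ : q → ℂ) :
    vecMulVec (0 : p → ℂ) ψ = 0 := by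
  ext i j; simp [vecMulVec_apply]

omit h1 hlam in
theorem single_dot (i₀ : Fin m) : (Pi.single i₀ 1 : Fin m → ℂ) ⬝ᵥ Pi.single i₀ 1 = 1 := by
  simp [dotProduct, Pi.single_apply]

theorem core {p : Type*} (t : p → ℂ) (ψ : Fin n → ℂ) (i₀ : Fin m) :
    ((lam : ℂ)⁻¹ • vecMulVec t (Pi.single i₀ 1)) *
      (μ.conjTranspose * vecMulVec (μ *ᵥ Pi.single i₀ 1) ψ) = vecMulVec t ψ := by
  rw [muH_rank1 m n μ lam h1 hlam, Matrix.mul_smul, Matrix.smul_mul, smul_smul,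
    mul_inv_cancel₀ hlam, one_smul, mul_vecMulVec, vecMulVec_mulVec, single_dot, one_smul]

/-- rank-one upper blocks are in piJ 3 -/
theorem rank1_piJ3
    (h2 : ¬ ∃ c : ℂ, μ * μ.conjTranspose = c • (1 : Matrix (Fin n) (Fin n) ℂ))
    (x0 : Fin m → ℂ) (ψ : Fin n → ℂ) :
    fromBlocks 0 (vecMulVec x0 ψ) (0 : Matrix (Fin n) (Fin m) ℂ) 0 ∈ piJ m n μ 3 := by
  obtain ⟨v, φ, hφv, hφνv⟩ := exists_vec_phi (μ * μ.conjTranspose) h2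
  set y : Fin n → ℂ := (lam : ℂ)⁻¹ • (μ *ᵥ x0) with hy
  set b₁ := vecMulVec y φ with hb₁
  set b₂ := vecMulVec v ψ with hb₂
  have h12 : b₁ * b₂ = 0 := by
    rw [hb₁, hb₂, mul_vecMulVec, vecMulVec_mulVec, hφv, zero_smul, vecMulVec_zero_left]
  have key : (1 : Matrix (Fin m) (Fin m) ℂ) *
      (μ.conjTranspose * (b₁ * (μ * (μ.conjTranspose * b₂)))) = vecMulVec x0 ψ := by
    rw [Matrix.one_mul, hb₂, mul_vecMulVec, mul_vecMulVec, hb₁, mul_vecMulVec,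
      vecMulVec_mulVec, Matrix.mulVec_mulVec, hφνv, one_smul, mul_vecMulVec, hy,
      Matrix.mulVec_smul, Matrix.mulVec_mulVec, h1, Matrix.smul_mulVec,
      Matrix.one_mulVec, smul_smul, inv_mul_cancel₀ hlam, one_smul]
  have := W3upper m n μ lam h1 hlam 1 b₁ b₂ h12
  rwa [key] at this

theorem od_le_piJ3
    (h2 : ¬ ∃ c : ℂ, μ * μ.conjTranspose = c • (1 : Matrix (Fin n) (Fin n) ℂ)) :
    od m n ≤ piJ m n μ 3 := by
  intro x hx
  obtain ⟨X, Y, rfl⟩ := (mem_od_iff m n x).mp hx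
  have split : fromBlocks (0 : Matrix (Fin m) (Fin m) ℂ) X Y 0 =
      fromBlocks 0 X 0 0 + fromBlocks 0 0 Y 0 := by
    rw [Matrix.fromBlocks_add]; apply fb_eq <;> simp
  rw [split]
  apply Submodule.add_mem
  · -- upper block via rank-one decomposition
    have dec : fromBlocks (0 : Matrix (Fin m) (Fin m) ℂ) X (0 : Matrix (Fin n) (Fin m) ℂ) 0 =
        ∑ j : Fin n, fromBlocks (0 : Matrix (Fin m) (Fin m) ℂ)
          (vecMulVec (fun i => X i j) (Pi.single j 1)) (0 : Matrix (Fin n) (Fin m) ℂ) 0 := by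
      rw [sum_fb]
      exact fb_eq m n (by simp) (matrix_eq_sum_rankone X) (by simp) (by simp)
    rw [dec]
    exact Submodule.sum_mem _ (fun j _ => rank1_piJ3 m n μ lam h1 hlam h2 _ _)
  · -- lower block from J² times a one-form
    have hel : fromBlocks 0 0 0 ((lam : ℂ)⁻¹ • (Y * μ.conjTranspose)) ∈ piJ m n μ 2 :=
      lr_le_piJ2 m n μ h2 ⟨_, rfl⟩
    have := mulJ m n μ (by norm_num) hel (1, 0)
    rw [show (2:ℕ) + 1 = 3 from rfl] at this
    have key : fromBlocks 0 0 0 ((lam : ℂ)⁻¹ • (Y * μ.conjTranspose)) * commM m n μ (1, 0) =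
        fromBlocks 0 0 Y 0 := by
      rw [commM_eq, mul_dg_od]
      refine fb_eq m n rfl (by simp) ?_ rfl
      have : L m n μ ((1 : Matrix (Fin m) (Fin m) ℂ), (0 : Matrix (Fin n) (Fin n) ℂ)) = μ := by
        simp [L]
      rw [this, Matrix.smul_mul, Matrix.mul_assoc, h1, Matrix.mul_smul, Matrix.mul_one,
        smul_smul, inv_mul_cancel₀ hlam, one_smul]
    rwa [key] at this

/-- step: off-diagonal in piJ k implies diagonal in piJ (k+1) -/
theorem step_od_dg {k : ℕ} (hk1 : 1 ≤ k) (hk : od m n ≤ piJ m n μ k) (i₀ : Fin m) :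
    dg m n ≤ piJ m n μ (k + 1) := by
  intro x hx
  obtain ⟨S, T, rfl⟩ := (mem_dg_iff m n x).mp hx
  have split : fromBlocks S (0 : Matrix (Fin m) (Fin n) ℂ) 0 T =
      fromBlocks S 0 0 0 + fromBlocks 0 0 0 T := by
    rw [Matrix.fromBlocks_add]; apply fb_eq <;> simp
  rw [split]
  apply Submodule.add_mem
  · have hel : fromBlocks 0 (-((lam : ℂ)⁻¹ • (S * μ.conjTranspose))) 0 0 ∈ piJ m n μ k :=
      hk ((mem_od_iff m n _).mpr ⟨_, 0, rfl⟩)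
    have := mulJ m n μ hk1 hel (0, 1)
    have key : fromBlocks 0 (-((lam : ℂ)⁻¹ • (S * μ.conjTranspose))) 0 0 * commM m n μ (0, 1) =
        fromBlocks S 0 0 0 := by
      rw [commM_eq, mul_od_od]
      refine fb_eq m n ?_ rfl rfl (by simp)
      have : L m n μ ((0 : Matrix (Fin m) (Fin m) ℂ), (1 : Matrix (Fin n) (Fin n) ℂ)) = -μ := by
        simp [L]
      rw [this]
      simp only [Matrix.neg_mul, Matrix.mul_neg, neg_neg]
      rw [Matrix.smul_mul, Matrix.mul_assoc, h1, Matrix.mul_smul, Matrix.mul_one,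
        smul_smul, inv_mul_cancel₀ hlam, one_smul]
    rwa [key] at this
  · have dec : fromBlocks (0 : Matrix (Fin m) (Fin m) ℂ) 0 0 T =
        ∑ j : Fin n, fromBlocks 0 0 0 (vecMulVec (fun i => T i j) (Pi.single j 1)) := by
      rw [sum_fb]
      exact fb_eq m n (by simp) (by simp) (by simp) (matrix_eq_sum_rankone T)
    rw [dec]
    refine Submodule.sum_mem _ (fun j _ => ?_)
    have hel : fromBlocks 0 0 ((lam : ℂ)⁻¹ • vecMulVec (fun i => T i j) (Pi.single i₀ 1)) 0 ∈
        piJ m n μ k := hk ((mem_od_iff m n _).mpr ⟨0, _, rfl⟩)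
    have := mulJ m n μ hk1 hel (0, vecMulVec (μ *ᵥ Pi.single i₀ 1) (Pi.single j 1))
    have key : fromBlocks 0 0 ((lam : ℂ)⁻¹ • vecMulVec (fun i => T i j) (Pi.single i₀ 1)) 0 *
        commM m n μ (0, vecMulVec (μ *ᵥ Pi.single i₀ 1) (Pi.single j 1)) =
        fromBlocks 0 0 0 (vecMulVec (fun i => T i j) (Pi.single j 1)) := by
      rw [commM_eq, mul_od_od]
      refine fb_eq m n (by simp) rfl rfl ?_
      have hU : U m n μ ((0 : Matrix (Fin m) (Fin m) ℂ),
          vecMulVec (μ *ᵥ Pi.single i₀ 1) (Pi.single j 1)) =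
          μ.conjTranspose * vecMulVec (μ *ᵥ Pi.single i₀ 1) (Pi.single j 1) := by
        simp [U]
      rw [hU, core m n μ lam h1 hlam]
    rwa [key] at this

/-- step: diagonal in piJ k implies off-diagonal in piJ (k+1) -/
theorem step_dg_od {k : ℕ} (hk1 : 1 ≤ k) (hk : dg m n ≤ piJ m n μ k) (i₀ : Fin m) :
    od m n ≤ piJ m n μ (k + 1) := by
  intro x hx
  obtain ⟨X, Y, rfl⟩ := (mem_od_iff m n x).mp hx
  have split : fromBlocks (0 : Matrix (Fin m) (Fin m) ℂ) X Y 0 =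
      fromBlocks 0 X 0 0 + fromBlocks 0 0 Y 0 := by
    rw [Matrix.fromBlocks_add]; apply fb_eq <;> simp
  rw [split]
  apply Submodule.add_mem
  · have dec : fromBlocks (0 : Matrix (Fin m) (Fin m) ℂ) X (0 : Matrix (Fin n) (Fin m) ℂ) 0 =
        ∑ j : Fin n, fromBlocks (0 : Matrix (Fin m) (Fin m) ℂ)
          (vecMulVec (fun i => X i j) (Pi.single j 1)) (0 : Matrix (Fin n) (Fin m) ℂ) 0 := by
      rw [sum_fb]
      exact fb_eq m n (by simp) (matrix_eq_sum_rankone X) (by simp) (by simp)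
    rw [dec]
    refine Submodule.sum_mem _ (fun j _ => ?_)
    have hel : fromBlocks ((lam : ℂ)⁻¹ • vecMulVec (fun i => X i j) (Pi.single i₀ 1)) 0 0 0 ∈
        piJ m n μ k := hk ((mem_dg_iff m n _).mpr ⟨_, 0, rfl⟩)
    have := mulJ m n μ hk1 hel (0, vecMulVec (μ *ᵥ Pi.single i₀ 1) (Pi.single j 1))
    have key : fromBlocks ((lam : ℂ)⁻¹ • vecMulVec (fun i => X i j) (Pi.single i₀ 1)) 0 0 0 *
        commM m n μ (0, vecMulVec (μ *ᵥ Pi.single i₀ 1) (Pi.single j 1)) =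
        fromBlocks 0 (vecMulVec (fun i => X i j) (Pi.single j 1)) 0 0 := by
      rw [commM_eq, mul_dg_od]
      refine fb_eq m n rfl ?_ (by simp) rfl
      have hU : U m n μ ((0 : Matrix (Fin m) (Fin m) ℂ),
          vecMulVec (μ *ᵥ Pi.single i₀ 1) (Pi.single j 1)) =
          μ.conjTranspose * vecMulVec (μ *ᵥ Pi.single i₀ 1) (Pi.single j 1) := by
        simp [U]
      rw [hU, core m n μ lam h1 hlam]
    rwa [key] at this
  · have hel : fromBlocks 0 0 0 ((lam : ℂ)⁻¹ • (Y * μ.conjTranspose)) ∈ piJ m n μ k :=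
      hk ((mem_dg_iff m n _).mpr ⟨0, _, rfl⟩)
    have := mulJ m n μ hk1 hel (1, 0)
    have key : fromBlocks 0 0 0 ((lam : ℂ)⁻¹ • (Y * μ.conjTranspose)) * commM m n μ (1, 0) =
        fromBlocks 0 0 Y 0 := by
      rw [commM_eq, mul_dg_od]
      refine fb_eq m n rfl (by simp) ?_ rfl
      have : L m n μ ((1 : Matrix (Fin m) (Fin m) ℂ), (0 : Matrix (Fin n) (Fin n) ℂ)) = μ := by
        simp [L]
      rw [this, Matrix.smul_mul, Matrix.mul_assoc, h1, Matrix.mul_smul, Matrix.mul_one,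
        smul_smul, inv_mul_cancel₀ hlam, one_smul]
    rwa [key] at this


theorem ul_le_piOmega2 : ulsub m n ≤ piOmega m n μ 2 := by
  rintro x ⟨S, rfl⟩
  apply Submodule.subset_span
  refine ⟨(-((lam : ℂ)⁻¹ • S), 0), [(1, 0), (1, 0)], rfl, ?_⟩
  simp only [List.map_cons, List.map_nil, List.prod_cons, List.prod_nil, mul_one]
  rw [commM_eq, mul_od_od, piRep_eq, mul_dg_dg]
  refine fb_eq m n ?_ rfl rfl (by simp)
  have hUL : U m n μ ((1 : Matrix (Fin m) (Fin m) ℂ), (0 : Matrix (Fin n) (Fin n) ℂ)) *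
      L m n μ ((1 : Matrix (Fin m) (Fin m) ℂ), (0 : Matrix (Fin n) (Fin n) ℂ)) =
      -(μ.conjTranspose * μ) := by
    simp [U, L]
  rw [hUL, h1]
  simp only [Matrix.mul_smul, Matrix.smul_mul, smul_smul, inv_mul_cancel₀ hlam]
  simp only [neg_mul, mul_neg, neg_neg, Matrix.neg_mul, Matrix.mul_neg]
  rw [Matrix.smul_mul, Matrix.mul_smul, Matrix.mul_one, smul_smul,
    inv_mul_cancel₀ hlam, one_smul]

theorem parity_le (h2 : ¬ ∃ c : ℂ, μ * μ.conjTranspose = c • (1 : Matrix (Fin n) (Fin n) ℂ)) :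
    ∀ k, 3 ≤ k → piOmega m n μ k ≤ piJ m n μ k := by
  have i₀ : Fin m := ⟨0, m_pos m n μ h2⟩
  have H : ∀ k, 3 ≤ k → (¬ Even k → od m n ≤ piJ m n μ k) ∧
      (Even k → dg m n ≤ piJ m n μ k) := by
    intro k hk
    induction k, hk using Nat.le_induction with
    | base => exact ⟨fun _ => od_le_piJ3 m n μ lam h1 hlam h2, fun h => absurd h (by decide)⟩
    | succ k hk ih =>
      constructor
      · intro hodd
        have he : Even k := by
          by_contra hc
          exact hodd ((Nat.even_add_one).mpr hc)
        exact step_dg_od m n μ lam h1 hlam (by omega) (ih.2 he) i₀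
      · intro heven
        have ho : ¬ Even k := (Nat.even_add_one).mp heven
        exact step_od_dg m n μ lam h1 hlam (by omega) (ih.1 ho) i₀
  intro k hk
  by_cases he : Even k
  · exact le_trans (piOmega_le_dg m n μ he) ((H k hk).2 he)
  · exact le_trans (piOmega_le_od m n μ he) ((H k hk).1 he)

end WithLam2

end WithLam

end TwoPtHelper

open TwoPtHelper

/-- Two-point case iii: for m ≤ n, μ*μ = λ·1_m with λ > 0 but μμ* not
proportional to 1_n: π(J²) equals the block-diagonal matrices diag(0, b),
b ∈ M_n(ℂ); the quotient Ω_D²𝒜 = π(Ω²𝒜)/π(J²) is isomorphic to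
{diag(a, 0) : a ∈ M_m(ℂ)} (expressed as an internal complement:
π(Ω²𝒜) = π(J²) ⊕ {diag(a,0)}), and Ω_Dᵏ𝒜 = 0 for all k ≥ 3, i.e.
π(Ωᵏ𝒜) = π(Jᵏ). -/


theorem two_point_case_iii (μ : Matrix (Fin n) (Fin m) ℂ) (hmn : m ≤ n)
    (lam : ℝ) (hlam : 0 < lam)
    (h1 : μ.conjTranspose * μ = (lam : ℂ) • (1 : Matrix (Fin m) (Fin m) ℂ))
    (h2 : ¬ ∃ c : ℂ, μ * μ.conjTranspose = c • (1 : Matrix (Fin n) (Fin n) ℂ)) :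
    (piJ m n μ 2 = Submodule.span ℂ {x | ∃ b : Matrix (Fin n) (Fin n) ℂ,
        x = Matrix.fromBlocks 0 0 0 b}) ∧
    (piOmega m n μ 2 = piJ m n μ 2 ⊔ Submodule.span ℂ
        {x | ∃ a : Matrix (Fin m) (Fin m) ℂ, x = Matrix.fromBlocks a 0 0 0} ∧
      piJ m n μ 2 ⊓ Submodule.span ℂ
        {x | ∃ a : Matrix (Fin m) (Fin m) ℂ, x = Matrix.fromBlocks a 0 0 0} = ⊥) ∧
    (∀ k : ℕ, 3 ≤ k → piOmega m n μ k = piJ m n μ k) := by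
  have hlamC : (lam : ℂ) ≠ 0 := by
    simpa using ne_of_gt hlam
  have e1 : piJ m n μ 2 = lrsub m n :=
    le_antisymm (piJ2_le_lr m n μ lam h1) (lr_le_piJ2 m n μ h2)
  refine ⟨?_, ⟨?_, ?_⟩, ?_⟩
  · rw [span_lr]; exact e1
  · rw [span_ul]
    apply le_antisymm
    · intro x hx
      obtain ⟨P, Q, rfl⟩ := (mem_dg_iff m n x).mp (piOmega_le_dg m n μ (by decide) hx)
      have split : fromBlocks P (0 : Matrix (Fin m) (Fin n) ℂ) 0 Q =
          fromBlocks 0 0 0 Q + fromBlocks P 0 0 0 := by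
        rw [Matrix.fromBlocks_add]; apply fb_eq <;> simp
      rw [split]
      exact Submodule.add_mem _
        (Submodule.mem_sup_left (e1 ▸ lr_le_piJ2 m n μ h2 ⟨Q, rfl⟩))
        (Submodule.mem_sup_right ⟨P, rfl⟩)
    · exact sup_le (piJ_le_piOmega m n μ 2) (ul_le_piOmega2 m n μ lam h1 hlamC)
  · rw [span_ul, e1, eq_bot_iff]
    rintro x ⟨⟨T, hT⟩, ⟨S, hS⟩⟩
    have hT0 : T = 0 := by
      ext i j
      have h3 := congrArg (fun M => M (Sum.inr i) (Sum.inr j)) (hT.symm.trans hS)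
      simpa [Matrix.fromBlocks] using h3
    rw [Submodule.mem_bot, hT, hT0, Matrix.fromBlocks_zero]
  · intro k hk
    exact le_antisymm (parity_le m n μ lam h1 hlamC h2 k hk) (piJ_le_piOmega m n μ k)




end
end

section
/- In case iii of the two-point model (μ*μ ∝ 1_m, μμ* ≁ 1_n), the product on Ω_D¹𝒜 ≅ {(A,B) : A ∈ ℂ^{m×n}, B ∈ ℂ^{n×m}} descends to Ω_D²𝒜 as (A,B)∘(A′,B′) = diag(A·B′, 0); in particular the product is non-symmetric: there exist ν, ω ∈ Ω_D¹𝒜 with ν∘ω ≠ 0 but ω∘ν = 0. -/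
open Matrix

noncomputable section

variable (m n : ℕ)

/-- An element (A, B) of Ω_D¹𝒜 ≅ ℂ^{m×n} ⊕ ℂ^{n×m}, realized as the
block-off-diagonal matrix [[0, A],[B, 0]]. -/
def oneForm (A : Matrix (Fin m) (Fin n) ℂ) (B : Matrix (Fin n) (Fin m) ℂ) :
    Matrix (Fin m ⊕ Fin n) (Fin m ⊕ Fin n) ℂ :=
  Matrix.fromBlocks 0 A B 0


/-- Upper-left block as a linear map. -/
def ulBlock : Matrix (Fin m ⊕ Fin n) (Fin m ⊕ Fin n) ℂ →ₗ[ℂ] Matrix (Fin m) (Fin m) ℂ where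
  toFun x := x.toBlocks₁₁
  map_add' x y := by ext i j; simp [Matrix.toBlocks₁₁]
  map_smul' c x := by ext i j; simp [Matrix.toBlocks₁₁]

lemma mem_span_lr (x : Matrix (Fin m ⊕ Fin n) (Fin m ⊕ Fin n) ℂ)
    (hx : x ∈ Submodule.span ℂ {x | ∃ b : Matrix (Fin n) (Fin n) ℂ,
        x = Matrix.fromBlocks 0 0 0 b}) : ulBlock m n x = 0 := by
  have : Submodule.span ℂ {x | ∃ b : Matrix (Fin n) (Fin n) ℂ,
      x = Matrix.fromBlocks 0 0 0 b} ≤ LinearMap.ker (ulBlock m n) := by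
    rw [Submodule.span_le]
    rintro y ⟨b, rfl⟩
    simp [LinearMap.mem_ker, ulBlock, Matrix.toBlocks_fromBlocks₁₁]
  exact this hx

lemma oneForm_mul (A A' : Matrix (Fin m) (Fin n) ℂ) (B B' : Matrix (Fin n) (Fin m) ℂ) :
    oneForm m n A B * oneForm m n A' B' = Matrix.fromBlocks (A * B') 0 0 (B * A') := by
  simp [oneForm, Matrix.fromBlocks_multiply]

/-- Two-point case iii, product structure: with π(J²) = {diag(0, b)}, the
product on Ω_D¹𝒜 ≅ {(A,B)} descends to Ω_D²𝒜 as
(A,B)∘(A′,B′) = diag(A·B′, 0) modulo π(J²); in particular the product is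
non-symmetric: there are ν, ω ∈ Ω_D¹𝒜 with ν∘ω ≠ 0 but ω∘ν = 0 in Ω_D²𝒜. -/
theorem two_point_case_iii_product (μ : Matrix (Fin n) (Fin m) ℂ)
    (hm : 0 < m) (hmn : m ≤ n) (lam : ℝ) (hlam : 0 < lam)
    (h1 : μ.conjTranspose * μ = (lam : ℂ) • (1 : Matrix (Fin m) (Fin m) ℂ))
    (h2 : ¬ ∃ c : ℂ, μ * μ.conjTranspose = c • (1 : Matrix (Fin n) (Fin n) ℂ))
    (hJ : piJ m n μ 2 = Submodule.span ℂ {x | ∃ b : Matrix (Fin n) (Fin n) ℂ,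
        x = Matrix.fromBlocks 0 0 0 b}) :
    (∀ (A A' : Matrix (Fin m) (Fin n) ℂ) (B B' : Matrix (Fin n) (Fin m) ℂ),
      oneForm m n A B * oneForm m n A' B' - Matrix.fromBlocks (A * B') 0 0 0
        ∈ piJ m n μ 2) ∧
    (∃ (A A' : Matrix (Fin m) (Fin n) ℂ) (B B' : Matrix (Fin n) (Fin m) ℂ),
      oneForm m n A B * oneForm m n A' B' ∉ piJ m n μ 2 ∧
      oneForm m n A' B' * oneForm m n A B ∈ piJ m n μ 2) := by
  rw [hJ]
  constructor
  · intro A A' B B'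
    have h : oneForm m n A B * oneForm m n A' B' - Matrix.fromBlocks (A * B') 0 0 0
        = Matrix.fromBlocks 0 0 0 (B * A') := by
      rw [oneForm_mul]
      ext (i | i) (j | j) <;> simp [Matrix.fromBlocks]
    rw [h]
    exact Submodule.subset_span ⟨B * A', rfl⟩
  · set i0 : Fin m := ⟨0, hm⟩
    set j0 : Fin n := ⟨0, hm.trans_le hmn⟩
    refine ⟨Matrix.single i0 j0 (1:ℂ), 0, 0, Matrix.single j0 i0 (1:ℂ), ?_, ?_⟩
    · intro hmem
      have h0 := mem_span_lr m n _ hmem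
      rw [oneForm_mul] at h0
      have : (Matrix.single i0 j0 (1:ℂ) * Matrix.single j0 i0 (1:ℂ) : 
          Matrix (Fin m) (Fin m) ℂ) = 0 := by
        simpa [ulBlock, Matrix.toBlocks_fromBlocks₁₁] using h0
      have h2' := congrFun (congrFun this i0) i0
      simp [Matrix.mul_apply, Matrix.single] at h2'
    · rw [oneForm_mul]
      have h : Matrix.fromBlocks ((0 : Matrix (Fin m) (Fin n) ℂ) * (0 : Matrix (Fin n) (Fin m) ℂ)) 0 0
          (Matrix.single j0 i0 (1:ℂ) * Matrix.single i0 j0 (1:ℂ))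
          = Matrix.fromBlocks 0 0 0 (Matrix.single j0 i0 (1:ℂ) * Matrix.single i0 j0 (1:ℂ)) := by
        simp
      rw [h]
      exact Submodule.subset_span ⟨_, rfl⟩


end
end
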